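/- arXiv:2109.00276 — 7 statements merged into one kernel-verified Lean document; each statement's English description precedes it below -/
import Mathlib

section
/- Under the stated hypotheses, for every x ∈ ℝ the function x ↦ q(x,s) is twice differentiable and satisfies the ordinary differential equation D q''(x,s) − V'(x) q'(x,s) − s q(x,s) + 1 = 0 (derivatives taken in x). -/
open MeasureTheory Set



lemma aux_meas (s : ℝ) (G : ℝ → ℝ → ℝ)
    (hGc : ContinuousOn (fun p : ℝ × ℝ => G p.1 p.2) (univ ×ˢ Ici 0)) (x : ℝ) :
    AEStronglyMeasurable (fun t => Real.exp (-(s * t)) * G x t)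
      (volume.restrict (Ioi (0:ℝ))) := by
  apply ContinuousOn.aestronglyMeasurable ?_ measurableSet_Ioi
  have h1 : ContinuousOn (fun t : ℝ => G x t) (Ici 0) :=
    hGc.comp (Continuous.continuousOn (f := fun t : ℝ => ((x, t) : ℝ × ℝ)) (by continuity))
      (fun t ht => by simp [ht])
  have h2 : Continuous (fun t : ℝ => Real.exp (-(s * t))) := by continuity
  exact (h2.continuousOn.mul (h1.mono Ioi_subset_Ici_self))

lemma aux_int (s : ℝ) (hs : 0 < s) (G : ℝ → ℝ → ℝ)
    (hGc : ContinuousOn (fun p : ℝ × ℝ => G p.1 p.2) (univ ×ˢ Ici 0))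
    (hGb : ∃ C, ∀ x t : ℝ, 0 ≤ t → |G x t| ≤ C) (x : ℝ) :
    IntegrableOn (fun t => Real.exp (-(s * t)) * G x t) (Ioi (0:ℝ)) := by
  obtain ⟨C, hC⟩ := hGb
  apply Integrable.mono' ((exp_neg_integrableOn_Ioi 0 hs).const_mul C) (aux_meas s G hGc x)
  filter_upwards [ae_restrict_mem measurableSet_Ioi] with t ht
  have h1 : |G x t| ≤ C := hC x t ht.le
  have h0 : (0:ℝ) ≤ Real.exp (-(s*t)) := (Real.exp_pos _).le
  calc ‖Real.exp (-(s * t)) * G x t‖ = Real.exp (-(s*t)) * |G x t| := by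
        rw [norm_mul, Real.norm_eq_abs, abs_of_nonneg h0, Real.norm_eq_abs]
    _ ≤ Real.exp (-(s*t)) * C := by
        apply mul_le_mul_of_nonneg_left h1 h0
    _ = C * Real.exp (-s * t) := by ring_nf

lemma aux_deriv (s : ℝ) (hs : 0 < s) (G G' : ℝ → ℝ → ℝ)
    (hGc : ContinuousOn (fun p : ℝ × ℝ => G p.1 p.2) (univ ×ˢ Ici 0))
    (hGb : ∃ C, ∀ x t : ℝ, 0 ≤ t → |G x t| ≤ C)
    (hG'c : ContinuousOn (fun p : ℝ × ℝ => G' p.1 p.2) (univ ×ˢ Ici 0))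
    (hG'b : ∃ C, ∀ x t : ℝ, 0 ≤ t → |G' x t| ≤ C)
    (hd : ∀ x t : ℝ, 0 ≤ t → HasDerivAt (fun y => G y t) (G' x t) x) (x₀ : ℝ) :
    HasDerivAt (fun x => ∫ t in Ioi (0:ℝ), Real.exp (-(s * t)) * G x t)
      (∫ t in Ioi (0:ℝ), Real.exp (-(s * t)) * G' x₀ t) x₀ := by
  obtain ⟨C, hC⟩ := hG'b
  have := hasDerivAt_integral_of_dominated_loc_of_deriv_le (μ := volume.restrict (Ioi (0:ℝ)))
    (F := fun x t => Real.exp (-(s * t)) * G x t)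
    (F' := fun x t => Real.exp (-(s * t)) * G' x t)
    (bound := fun t => C * Real.exp (-s * t)) (x₀ := x₀) (Metric.ball_mem_nhds x₀ one_pos)
    (Filter.Eventually.of_forall fun x => aux_meas s G hGc x)
    (aux_int s hs G hGc hGb x₀)
    (aux_meas s G' hG'c x₀)
    ?_ ((exp_neg_integrableOn_Ioi 0 hs).const_mul C) ?_
  · exact this.2
  · filter_upwards [ae_restrict_mem measurableSet_Ioi] with t ht x _
    have h0 : (0:ℝ) ≤ Real.exp (-(s*t)) := (Real.exp_pos _).le
    calc ‖Real.exp (-(s * t)) * G' x t‖ = Real.exp (-(s*t)) * |G' x t| := by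
          rw [norm_mul, Real.norm_eq_abs, abs_of_nonneg h0, Real.norm_eq_abs]
      _ ≤ Real.exp (-(s*t)) * C := mul_le_mul_of_nonneg_left (hC x t ht.le) h0
      _ = C * Real.exp (-s * t) := by ring_nf
  · filter_upwards [ae_restrict_mem measurableSet_Ioi] with t ht x _
    exact (hd x t ht.le).const_mul _


/-- For the cubic Helmholtz potential `V(x) = α x²/2 − β x³/3` (`α, β > 0`), a diffusion
constant `D > 0` and `s > 0`, let `Q(x,t)` be a bounded continuous survival probability,
twice continuously differentiable in `x` with jointly continuous and bounded spatial
derivatives, with `Q(x,0) = 1`, satisfying the backward Chapman–Kolmogorov equation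
`∂ₜQ = D ∂ₓₓQ − V'(x) ∂ₓQ` for `t > 0`.  Then its Laplace transform in time,
`q(x,s) = ∫₀^∞ e^{−st} Q(x,t) dt`, is twice differentiable in `x` and satisfies
`D q'' − V' q' − s q + 1 = 0`. -/
theorem stmt2 (α β D s : ℝ) (hα : 0 < α) (hβ : 0 < β) (hD : 0 < D) (hs : 0 < s)
    (V : ℝ → ℝ) (hV : ∀ x, V x = α * x ^ 2 / 2 - β * x ^ 3 / 3)
    (Q : ℝ → ℝ → ℝ)
    (hQcont : ContinuousOn (fun p : ℝ × ℝ => Q p.1 p.2) (univ ×ˢ Ici 0))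
    (hQbdd : ∃ C, ∀ x t : ℝ, 0 ≤ t → |Q x t| ≤ C)
    (hQC2 : ∀ t : ℝ, 0 ≤ t → ContDiff ℝ 2 (fun x => Q x t))
    (hQx_cont : ContinuousOn (fun p : ℝ × ℝ => deriv (fun y => Q y p.2) p.1) (univ ×ˢ Ici 0))
    (hQx_bdd : ∃ C, ∀ x t : ℝ, 0 ≤ t → |deriv (fun y => Q y t) x| ≤ C)
    (hQxx_cont : ContinuousOn (fun p : ℝ × ℝ => deriv (deriv (fun y => Q y p.2)) p.1)
      (univ ×ˢ Ici 0))
    (hQxx_bdd : ∃ C, ∀ x t : ℝ, 0 ≤ t → |deriv (deriv (fun y => Q y t)) x| ≤ C)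
    (hQ0 : ∀ x : ℝ, Q x 0 = 1)
    (hPDE : ∀ x t : ℝ, 0 < t →
      HasDerivAt (fun τ => Q x τ)
        (D * deriv (deriv (fun y => Q y t)) x - deriv V x * deriv (fun y => Q y t) x) t)
    (q : ℝ → ℝ)
    (hq : ∀ x : ℝ, q x = ∫ t in Ioi (0 : ℝ), Real.exp (-(s * t)) * Q x t) :
    ∀ x : ℝ, DifferentiableAt ℝ q x ∧ DifferentiableAt ℝ (deriv q) x ∧
      D * deriv (deriv q) x - deriv V x * deriv q x - s * q x + 1 = 0 := by
  have hd1 : ∀ x t : ℝ, 0 ≤ t →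
      HasDerivAt (fun y => Q y t) (deriv (fun y => Q y t) x) x := fun x t ht =>
    (((hQC2 t ht).differentiable (by norm_num)) x).hasDerivAt
  have hd2 : ∀ x t : ℝ, 0 ≤ t →
      HasDerivAt (deriv (fun y => Q y t)) (deriv (deriv (fun y => Q y t)) x) x := by
    intro x t ht
    have h2 : ContDiff ℝ ((1:ℕ) + 1) (fun y => Q y t) := by
      exact_mod_cast hQC2 t ht
    have h := (contDiff_succ_iff_deriv.mp h2).2.2
    exact ((h.differentiable (by norm_num)) x).hasDerivAt
  have hqe : q = fun x => ∫ t in Ioi (0:ℝ), Real.exp (-(s * t)) * Q x t := funext hq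
  have hq1 : ∀ x : ℝ, HasDerivAt q
      (∫ t in Ioi (0:ℝ), Real.exp (-(s * t)) * deriv (fun y => Q y t) x) x := by
    intro x
    rw [hqe]
    exact aux_deriv s hs Q (fun x t => deriv (fun y => Q y t) x) hQcont hQbdd hQx_cont
      hQx_bdd hd1 x
  have hderivq : deriv q = fun x =>
      ∫ t in Ioi (0:ℝ), Real.exp (-(s * t)) * deriv (fun y => Q y t) x :=
    funext fun x => (hq1 x).deriv
  have hq2 : ∀ x : ℝ, HasDerivAt (deriv q)
      (∫ t in Ioi (0:ℝ), Real.exp (-(s * t)) * deriv (deriv (fun y => Q y t)) x) x := by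
    intro x
    rw [hderivq]
    exact aux_deriv s hs (fun x t => deriv (fun y => Q y t) x)
      (fun x t => deriv (deriv (fun y => Q y t)) x) hQx_cont hQx_bdd hQxx_cont hQxx_bdd hd2 x
  intro x
  refine ⟨(hq1 x).differentiableAt, (hq2 x).differentiableAt, ?_⟩
  -- integration by parts in t
  set A0 : ℝ := ∫ t in Ioi (0:ℝ), Real.exp (-(s * t)) * Q x t with hA0
  set A1 : ℝ := ∫ t in Ioi (0:ℝ), Real.exp (-(s * t)) * deriv (fun y => Q y t) x with hA1
  set A2 : ℝ := ∫ t in Ioi (0:ℝ), Real.exp (-(s * t)) * deriv (deriv (fun y => Q y t)) x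
    with hA2
  have I0 : IntegrableOn (fun t => Real.exp (-(s * t)) * Q x t) (Ioi (0:ℝ)) :=
    aux_int s hs Q hQcont hQbdd x
  have I1 : IntegrableOn (fun t => Real.exp (-(s * t)) * deriv (fun y => Q y t) x)
      (Ioi (0:ℝ)) := aux_int s hs _ hQx_cont hQx_bdd x
  have I2 : IntegrableOn (fun t => Real.exp (-(s * t)) * deriv (deriv (fun y => Q y t)) x)
      (Ioi (0:ℝ)) := aux_int s hs _ hQxx_cont hQxx_bdd x
  set g : ℝ → ℝ := fun t => Real.exp (-(s * t)) * Q x t with hg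
  set g' : ℝ → ℝ := fun t =>
    D * (Real.exp (-(s * t)) * deriv (deriv (fun y => Q y t)) x)
      - deriv V x * (Real.exp (-(s * t)) * deriv (fun y => Q y t) x)
      - s * (Real.exp (-(s * t)) * Q x t) with hg'
  have hgd : ∀ t ∈ Ioi (0:ℝ), HasDerivAt g (g' t) t := by
    intro t ht
    have he : HasDerivAt (fun τ : ℝ => Real.exp (-(s * τ))) (-s * Real.exp (-(s * t))) t := by
      have : HasDerivAt (fun τ : ℝ => -(s * τ)) (-s) t := by
        simpa using (hasDerivAt_id t).const_mul (-s)
      simpa [mul_comm] using this.exp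
    have : HasDerivAt (fun τ => Real.exp (-(s * τ)) * Q x τ) _ t := he.mul (hPDE x t ht)
    convert this using 1
    simp only [hg']
    ring
  have hgcont : ContinuousWithinAt g (Ici 0) 0 := by
    have h1 : ContinuousOn (fun t : ℝ => Q x t) (Ici 0) :=
      hQcont.comp (Continuous.continuousOn (f := fun t : ℝ => ((x, t) : ℝ × ℝ)) (by continuity))
        (fun t ht => by simp [ht])
    have h2 : Continuous (fun t : ℝ => Real.exp (-(s * t))) := by continuity
    exact ((h2.continuousOn.mul h1) 0 (by simp)).mono (by simp)
  have hg'int : IntegrableOn g' (Ioi (0:ℝ)) :=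
    ((I2.const_mul D).sub (I1.const_mul (deriv V x))).sub (I0.const_mul s)
  have hgtend : Filter.Tendsto g Filter.atTop (nhds 0) := by
    obtain ⟨C, hC⟩ := hQbdd
    apply squeeze_zero_norm' (a := fun t => C * Real.exp (-(s * t)))
    · filter_upwards [Filter.eventually_ge_atTop (0:ℝ)] with t ht
      have h0 : (0:ℝ) ≤ Real.exp (-(s*t)) := (Real.exp_pos _).le
      calc ‖g t‖ = Real.exp (-(s*t)) * |Q x t| := by
            rw [hg, norm_mul, Real.norm_eq_abs, abs_of_nonneg h0, Real.norm_eq_abs]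
        _ ≤ Real.exp (-(s*t)) * C := mul_le_mul_of_nonneg_left (hC x t ht) h0
        _ = C * Real.exp (-(s*t)) := by ring
    · have h1 : Filter.Tendsto (fun t : ℝ => -(s * t)) Filter.atTop Filter.atBot := by
        apply Filter.tendsto_neg_atBot_iff.mpr
        exact (Filter.tendsto_id.const_mul_atTop hs)
      have := (Real.tendsto_exp_atBot.comp h1).const_mul C
      simpa using this
  have hparts : ∫ t in Ioi (0:ℝ), g' t = 0 - g 0 :=
    integral_Ioi_of_hasDerivAt_of_tendsto hgcont hgd hg'int hgtend
  have hg0 : g 0 = 1 := by simp [hg, hQ0 x]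
  have hsplit : ∫ t in Ioi (0:ℝ), g' t = D * A2 - deriv V x * A1 - s * A0 := by
    calc ∫ t in Ioi (0:ℝ), g' t
        = (∫ t in Ioi (0:ℝ), (D * (Real.exp (-(s * t)) * deriv (deriv (fun y => Q y t)) x)
            - deriv V x * (Real.exp (-(s * t)) * deriv (fun y => Q y t) x)))
          - ∫ t in Ioi (0:ℝ), s * (Real.exp (-(s * t)) * Q x t) :=
          MeasureTheory.integral_sub ((I2.const_mul D).sub (I1.const_mul (deriv V x)))
            (I0.const_mul s)
      _ = ((∫ t in Ioi (0:ℝ), D * (Real.exp (-(s * t)) * deriv (deriv (fun y => Q y t)) x))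
            - ∫ t in Ioi (0:ℝ), deriv V x * (Real.exp (-(s * t)) * deriv (fun y => Q y t) x))
          - ∫ t in Ioi (0:ℝ), s * (Real.exp (-(s * t)) * Q x t) := by
          rw [MeasureTheory.integral_sub (I2.const_mul D) (I1.const_mul (deriv V x))]
      _ = D * A2 - deriv V x * A1 - s * A0 := by
          rw [integral_const_mul, integral_const_mul,
            integral_const_mul]
  have e0 : q x = A0 := hq x
  have e1 : deriv q x = A1 := (hq1 x).deriv
  have e2 : deriv (deriv q) x = A2 := (hq2 x).deriv
  rw [e0, e1, e2]
  rw [hg0] at hparts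
  linarith [hsplit.symm.trans hparts]
end

section
/- Under the stated hypotheses, for every x ∈ ℝ the function x ↦ q(x,s) is twice differentiable and satisfies the ordinary differential equation D q''(x,s) − V'(x) q'(x,s) − (s + r) q(x,s) + 1 + r q(x₀,s) = 0 (derivatives taken in x). -/
open MeasureTheory Set Filter

section Aux

lemma sliceCont {G : ℝ → ℝ → ℝ}
    (h : ContinuousOn (fun p : ℝ × ℝ => G p.1 p.2) (univ ×ˢ Ici 0)) (x : ℝ) :
    ContinuousOn (fun t => G x t) (Ici (0:ℝ)) := by
  intro t ht
  have h1 : ContinuousWithinAt (fun p : ℝ × ℝ => G p.1 p.2) (univ ×ˢ Ici 0) (x, t) :=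
    h (x, t) ⟨mem_univ _, ht⟩
  exact h1.comp ((continuous_const.prodMk continuous_id).continuousWithinAt)
    (fun u hu => ⟨mem_univ _, hu⟩)

lemma sliceAESM {G : ℝ → ℝ → ℝ}
    (h : ContinuousOn (fun p : ℝ × ℝ => G p.1 p.2) (univ ×ˢ Ici 0)) (x : ℝ) :
    AEStronglyMeasurable (fun t => G x t) (volume.restrict (Ioi (0:ℝ))) :=
  ((sliceCont h x).mono Ioi_subset_Ici_self).aestronglyMeasurable measurableSet_Ioi

lemma exp_mul_integrable {s : ℝ} (hs : 0 < s) {g : ℝ → ℝ}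
    (hg : AEStronglyMeasurable g (volume.restrict (Ioi (0:ℝ))))
    {C : ℝ} (hC : ∀ t, 0 ≤ t → |g t| ≤ C) :
    IntegrableOn (fun t => Real.exp (-(s*t)) * g t) (Ioi (0:ℝ)) := by
  have hexp : IntegrableOn (fun t : ℝ => Real.exp (-s * t)) (Ioi 0) :=
    exp_neg_integrableOn_Ioi 0 hs
  refine (hexp.const_mul C).mono' ?_ ?_
  · exact ((Real.continuous_exp.comp (continuous_const.mul continuous_id).neg)
      |>.aestronglyMeasurable.restrict.mul hg)
  · filter_upwards [ae_restrict_mem measurableSet_Ioi] with t ht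
    have ht0 : (0:ℝ) ≤ t := le_of_lt ht
    have : |Real.exp (-(s*t)) * g t| = Real.exp (-(s*t)) * |g t| := by
      rw [abs_mul, abs_of_pos (Real.exp_pos _)]
    rw [Real.norm_eq_abs, this, neg_mul]
    calc Real.exp (-(s*t)) * |g t| ≤ Real.exp (-(s*t)) * C :=
          mul_le_mul_of_nonneg_left (hC t ht0) (Real.exp_pos _).le
      _ = C * Real.exp (-(s*t)) := by ring

lemma hasDerivAt_laplace {s : ℝ} (hs : 0 < s) (G G' : ℝ → ℝ → ℝ)
    (hGc : ContinuousOn (fun p : ℝ × ℝ => G p.1 p.2) (univ ×ˢ Ici 0))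
    (hG'c : ContinuousOn (fun p : ℝ × ℝ => G' p.1 p.2) (univ ×ˢ Ici 0))
    {C C' : ℝ} (hGb : ∀ x t, 0 ≤ t → |G x t| ≤ C) (hG'b : ∀ x t, 0 ≤ t → |G' x t| ≤ C')
    (hdiff : ∀ t : ℝ, 0 ≤ t → ∀ x, HasDerivAt (fun y => G y t) (G' x t) x) (x : ℝ) :
    HasDerivAt (fun z => ∫ t in Ioi (0:ℝ), Real.exp (-(s*t)) * G z t)
      (∫ t in Ioi (0:ℝ), Real.exp (-(s*t)) * G' x t) x := by
  have key := hasDerivAt_integral_of_dominated_loc_of_deriv_le (μ := volume.restrict (Ioi (0:ℝ)))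
    (F := fun z t => Real.exp (-(s*t)) * G z t)
    (F' := fun z t => Real.exp (-(s*t)) * G' z t) (x₀ := x)
    (bound := fun t => C' * Real.exp (-s * t)) (s := univ) univ_mem
    (Filter.Eventually.of_forall fun z =>
      ((Real.continuous_exp.comp (continuous_const.mul continuous_id).neg)
        |>.aestronglyMeasurable.restrict.mul (sliceAESM hGc z)))
    (exp_mul_integrable hs (sliceAESM hGc x) (hGb x))
    (((Real.continuous_exp.comp (continuous_const.mul continuous_id).neg)
        |>.aestronglyMeasurable.restrict.mul (sliceAESM hG'c x)))
    ?_ ((exp_neg_integrableOn_Ioi 0 hs).const_mul C') ?_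
  · exact key.2
  · filter_upwards [ae_restrict_mem measurableSet_Ioi] with t ht z _
    have ht0 : (0:ℝ) ≤ t := le_of_lt ht
    have : |Real.exp (-(s*t)) * G' z t| = Real.exp (-(s*t)) * |G' z t| := by
      rw [abs_mul, abs_of_pos (Real.exp_pos _)]
    rw [Real.norm_eq_abs, this, neg_mul]
    calc Real.exp (-(s*t)) * |G' z t| ≤ Real.exp (-(s*t)) * C' :=
          mul_le_mul_of_nonneg_left (hG'b z t ht0) (Real.exp_pos _).le
      _ = C' * Real.exp (-(s*t)) := by ring
  · filter_upwards [ae_restrict_mem measurableSet_Ioi] with t ht z _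
    exact (hdiff t (le_of_lt ht) z).const_mul (Real.exp (-(s*t)))

end Aux

set_option maxHeartbeats 1600000 in
/-- For the cubic Helmholtz potential `V(x) = α x²/2 − β x³/3` (`α, β > 0`), a diffusion
constant `D > 0` and `s > 0`, let `Q(x,t)` be a bounded continuous survival probability,
twice continuously differentiable in `x` with jointly continuous and bounded spatial
derivatives, with `Q(x,0) = 1`, satisfying the backward Chapman–Kolmogorov equation
`∂ₜQ = D ∂ₓₓQ − V'(x) ∂ₓQ` for `t > 0`.  Then its Laplace transform in time,
`q(x,s) = ∫₀^∞ e^{−st} Q(x,t) dt`, is twice differentiable in `x` and satisfies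
`D q'' − V' q' − (s+r) q + 1 + r q(x₀) = 0`.  Here the backward equation includes the
resetting terms `− r Q(x,t) + r Q(x₀,t)` with resetting rate `r > 0` and resetting
position `x₀`. -/
theorem stmt3 (α β D s r x₀ : ℝ) (hα : 0 < α) (hβ : 0 < β) (hD : 0 < D) (hs : 0 < s)
    (hr : 0 < r)
    (V : ℝ → ℝ) (hV : ∀ x, V x = α * x ^ 2 / 2 - β * x ^ 3 / 3)
    (Q : ℝ → ℝ → ℝ)
    (hQcont : ContinuousOn (fun p : ℝ × ℝ => Q p.1 p.2) (univ ×ˢ Ici 0))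
    (hQbdd : ∃ C, ∀ x t : ℝ, 0 ≤ t → |Q x t| ≤ C)
    (hQC2 : ∀ t : ℝ, 0 ≤ t → ContDiff ℝ 2 (fun x => Q x t))
    (hQx_cont : ContinuousOn (fun p : ℝ × ℝ => deriv (fun y => Q y p.2) p.1) (univ ×ˢ Ici 0))
    (hQx_bdd : ∃ C, ∀ x t : ℝ, 0 ≤ t → |deriv (fun y => Q y t) x| ≤ C)
    (hQxx_cont : ContinuousOn (fun p : ℝ × ℝ => deriv (deriv (fun y => Q y p.2)) p.1)
      (univ ×ˢ Ici 0))
    (hQxx_bdd : ∃ C, ∀ x t : ℝ, 0 ≤ t → |deriv (deriv (fun y => Q y t)) x| ≤ C)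
    (hQ0 : ∀ x : ℝ, Q x 0 = 1)
    (hPDE : ∀ x t : ℝ, 0 < t →
      HasDerivAt (fun τ => Q x τ)
        (D * deriv (deriv (fun y => Q y t)) x - deriv V x * deriv (fun y => Q y t) x
          - r * Q x t + r * Q x₀ t) t)
    (q : ℝ → ℝ)
    (hq : ∀ x : ℝ, q x = ∫ t in Ioi (0 : ℝ), Real.exp (-(s * t)) * Q x t) :
    ∀ x : ℝ, DifferentiableAt ℝ q x ∧ DifferentiableAt ℝ (deriv q) x ∧
      D * deriv (deriv q) x - deriv V x * deriv q x - (s + r) * q x + 1 + r * q x₀ = 0 := by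
  obtain ⟨C₀, hC₀⟩ := hQbdd
  obtain ⟨C₁, hC₁⟩ := hQx_bdd
  obtain ⟨C₂, hC₂⟩ := hQxx_bdd
  set qx : ℝ → ℝ := fun z => ∫ t in Ioi (0:ℝ), Real.exp (-(s*t)) * deriv (fun y => Q y t) z
    with hqx_def
  set qxx : ℝ → ℝ := fun z => ∫ t in Ioi (0:ℝ), Real.exp (-(s*t)) * deriv (deriv (fun y => Q y t)) z
    with hqxx_def
  have hqfun : q = fun z => ∫ t in Ioi (0:ℝ), Real.exp (-(s*t)) * Q z t := funext hq
  -- first derivative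
  have hq' : ∀ z : ℝ, HasDerivAt q (qx z) z := by
    intro z
    rw [hqfun]
    exact hasDerivAt_laplace hs Q (fun x t => deriv (fun y => Q y t) x) hQcont hQx_cont
      (fun x t ht => hC₀ x t ht) (fun x t ht => hC₁ x t ht)
      (fun t ht x => (((hQC2 t ht).differentiable two_ne_zero) x).hasDerivAt) z
  have hderivq : deriv q = qx := funext fun z => (hq' z).deriv
  -- second derivative
  have hqx' : ∀ z : ℝ, HasDerivAt qx (qxx z) z := by
    intro z
    refine hasDerivAt_laplace hs (fun x t => deriv (fun y => Q y t) x)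
      (fun x t => deriv (deriv (fun y => Q y t)) x) hQx_cont hQxx_cont
      (fun x t ht => hC₁ x t ht) (fun x t ht => hC₂ x t ht) ?_ z
    intro t ht x
    have h2 : ContDiff ℝ (1+1) (fun y => Q y t) := by
      have := hQC2 t ht; norm_num at this ⊢; exact this
    have hd1 : ContDiff ℝ 1 (deriv (fun y => Q y t)) := (contDiff_succ_iff_deriv.mp h2).2.2
    exact ((hd1.differentiable one_ne_zero) x).hasDerivAt
  intro x
  refine ⟨(hq' x).differentiableAt, ?_, ?_⟩
  · rw [hderivq]; exact (hqx' x).differentiableAt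
  -- the ODE
  have hderivq2 : deriv qx x = qxx x := (hqx' x).deriv
  rw [hderivq, hderivq2]
  -- integration by parts in time
  set e : ℝ → ℝ := fun t => Real.exp (-(s*t)) with he_def
  set f' : ℝ → ℝ := fun t => -s * (e t * Q x t) +
    (D * (e t * deriv (deriv (fun y => Q y t)) x) - deriv V x * (e t * deriv (fun y => Q y t) x)
      - r * (e t * Q x t) + r * (e t * Q x₀ t)) with hf'_def
  have I0 : IntegrableOn (fun t => e t * Q x t) (Ioi (0:ℝ)) :=
    exp_mul_integrable hs (sliceAESM hQcont x) (hC₀ x)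
  have I0' : IntegrableOn (fun t => e t * Q x₀ t) (Ioi (0:ℝ)) :=
    exp_mul_integrable hs (sliceAESM hQcont x₀) (hC₀ x₀)
  have I1 : IntegrableOn (fun t => e t * deriv (fun y => Q y t) x) (Ioi (0:ℝ)) :=
    exp_mul_integrable hs (sliceAESM (G := fun a b => deriv (fun y => Q y b) a) hQx_cont x) (hC₁ x)
  have I2 : IntegrableOn (fun t => e t * deriv (deriv (fun y => Q y t)) x) (Ioi (0:ℝ)) :=
    exp_mul_integrable hs (sliceAESM (G := fun a b => deriv (deriv (fun y => Q y b)) a) hQxx_cont x) (hC₂ x)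
  have hB11 : IntegrableOn (fun t => D * (e t * deriv (deriv (fun y => Q y t)) x)
      - deriv V x * (e t * deriv (fun y => Q y t) x)) (Ioi (0:ℝ)) :=
    (I2.const_mul D).sub (I1.const_mul (deriv V x))
  have hB1 : IntegrableOn (fun t => D * (e t * deriv (deriv (fun y => Q y t)) x)
      - deriv V x * (e t * deriv (fun y => Q y t) x) - r * (e t * Q x t)) (Ioi (0:ℝ)) :=
    hB11.sub (I0.const_mul r)
  have hB : IntegrableOn (fun t => D * (e t * deriv (deriv (fun y => Q y t)) x)
      - deriv V x * (e t * deriv (fun y => Q y t) x) - r * (e t * Q x t)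
      + r * (e t * Q x₀ t)) (Ioi (0:ℝ)) := hB1.add (I0'.const_mul r)
  have hf'int : IntegrableOn f' (Ioi (0:ℝ)) := (I0.const_mul (-s)).add hB
  have hFderiv : ∀ t ∈ Ioi (0:ℝ), HasDerivAt (fun τ => e τ * Q x τ) (f' t) t := by
    intro t ht
    have h1 : HasDerivAt (fun τ : ℝ => -(s*τ)) (-(s*1)) t :=
      ((hasDerivAt_id t).const_mul s).neg
    have h2 : HasDerivAt (fun τ : ℝ => e τ) (Real.exp (-(s*t)) * -(s*1)) t := h1.exp
    have h3 : HasDerivAt (fun τ => e τ * Q x τ) _ t := h2.fun_mul (hPDE x t ht)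
    convert h3 using 1
    simp only [hf'_def, he_def]
    ring
  have hcont0 : ContinuousWithinAt (fun t => e t * Q x t) (Ici (0:ℝ)) 0 := by
    refine ContinuousWithinAt.mul ?_ ((sliceCont hQcont x) 0 self_mem_Ici)
    exact (Real.continuous_exp.comp (continuous_const.mul continuous_id).neg).continuousWithinAt
  have htop : Tendsto (fun t => e t * Q x t) atTop (nhds 0) := by
    have hexp : Tendsto (fun t : ℝ => Real.exp (-(s*t))) atTop (nhds 0) := by
      have h1 : Tendsto (fun t : ℝ => -(s*t)) atTop atBot := by
        have := (tendsto_id (α := ℝ) (x := atTop)).const_mul_atTop hs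
        exact (tendsto_neg_atBot_iff.mpr this)
      exact Real.tendsto_exp_atBot.comp h1
    have hsq : Tendsto (fun t : ℝ => C₀ * Real.exp (-(s*t))) atTop (nhds 0) := by
      simpa using hexp.const_mul C₀
    refine squeeze_zero_norm' ?_ hsq
    filter_upwards [Ioi_mem_atTop (0:ℝ)] with t ht
    have ht0 : (0:ℝ) ≤ t := le_of_lt ht
    have : |e t * Q x t| = Real.exp (-(s*t)) * |Q x t| := by
      rw [he_def, abs_mul, abs_of_pos (Real.exp_pos _)]
    rw [Real.norm_eq_abs, this]
    calc Real.exp (-(s*t)) * |Q x t| ≤ Real.exp (-(s*t)) * C₀ :=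
          mul_le_mul_of_nonneg_left (hC₀ x t ht0) (Real.exp_pos _).le
      _ = C₀ * Real.exp (-(s*t)) := by ring
  have hIBP : ∫ t in Ioi (0:ℝ), f' t = 0 - (e 0 * Q x 0) :=
    integral_Ioi_of_hasDerivAt_of_tendsto hcont0 hFderiv hf'int htop
  have hF0 : e 0 * Q x 0 = 1 := by simp [he_def, hQ0 x]
  rw [hF0] at hIBP
  have hsplit : ∫ t in Ioi (0:ℝ), f' t
      = -s * q x + (D * qxx x - deriv V x * qx x - r * q x + r * q x₀) := by
    rw [hf'_def]
    rw [integral_add (I0.const_mul (-s)) hB, integral_add hB1 (I0'.const_mul r),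
      integral_sub hB11 (I0.const_mul r),
      integral_sub (I2.const_mul D) (I1.const_mul (deriv V x)),
      integral_const_mul, integral_const_mul, integral_const_mul, integral_const_mul,
      integral_const_mul]
    rw [hq x, hq x₀, hqx_def, hqxx_def]
  rw [hsplit] at hIBP
  linarith
end

section
/- Let T be a nonnegative real-valued random variable, r > 0, and R an exponential random variable with rate r independent of T. Then E[min(T, R)²] = 2(1 − φ(r))/r² − (2/r)·E[T·exp(−r T)], where φ(r) = E[exp(−r T)]. -/
open MeasureTheory ProbabilityTheory
open Real Set

lemma expderiv {r : ℝ} (x : ℝ) :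
    HasDerivAt (fun t : ℝ => Real.exp (-(r*t))) (-r * Real.exp (-(r*x))) x := by
  have h : HasDerivAt (fun t : ℝ => -(r*t)) (-r) x := by
    simpa [Pi.neg_def] using ((hasDerivAt_id x).const_mul r).neg
  simpa [mul_comm] using h.exp

-- antiderivative for r t^2 e^{-rt}
lemma antider {r : ℝ} (hr : 0 < r) (t : ℝ) :
    HasDerivAt (fun t => -((t^2 + 2*t/r + 2/r^2) * Real.exp (-(r*t))))
      (r * Real.exp (-(r*t)) * t^2) t := by
  have h1 : HasDerivAt (fun t : ℝ => t^2 + 2*t/r + 2/r^2) (2*t + 2/r) t := by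
    have := ((hasDerivAt_pow 2 t).add (((hasDerivAt_id t).const_mul 2).div_const r)).add_const
      (2/r^2)
    convert this using 1; rfl; rfl; rfl
    simp
  have := (h1.mul (expderiv (r := r) t)).neg
  convert this using 1; rfl; rfl; rfl
  have hrne : r ≠ 0 := hr.ne'
  field_simp
  ring

lemma expint {r : ℝ} (hr : 0 < r) (s : ℝ) :
    IntegrableOn (fun t : ℝ => Real.exp (-(r*t))) (Ioi s) := by
  have := exp_neg_integrableOn_Ioi s hr
  simpa [neg_mul] using this

lemma piece2 {r : ℝ} (hr : 0 < r) (s : ℝ) :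
    ∫ t in Ioi s, r * Real.exp (-(r*t)) * s^2 = s^2 * Real.exp (-(r*s)) := by
  have hderiv : ∀ x ∈ Ici s, HasDerivAt (fun t => -(s^2 * Real.exp (-(r*t))))
      (r * Real.exp (-(r*x)) * s^2) x := by
    intro x _
    have := ((expderiv x (r := r)).const_mul (s^2)).neg
    convert this using 1; rfl; rfl; rfl; ring
  have hint : IntegrableOn (fun t => r * Real.exp (-(r*t)) * s^2) (Ioi s) :=
    ((expint hr s).const_mul r).mul_const _
  have htend : Filter.Tendsto (fun t => -(s^2 * Real.exp (-(r*t)))) Filter.atTop (nhds 0) := by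
    have h0 : Filter.Tendsto (fun t : ℝ => Real.exp (-(r*t))) Filter.atTop (nhds 0) := by
      have harg : Filter.Tendsto (fun t : ℝ => -(r*t)) Filter.atTop Filter.atBot := by
        apply Filter.tendsto_atTop_atBot.2
        intro b
        refine ⟨-b/r, fun a ha => ?_⟩
        rw [div_le_iff₀ hr] at ha
        nlinarith
      exact Real.tendsto_exp_atBot.comp harg
    have := (h0.const_mul (s^2)).neg
    simpa using this
  have := integral_Ioi_of_hasDerivAt_of_tendsto' hderiv hint htend
  rw [this]; ring

lemma piece1 {r : ℝ} (hr : 0 < r) {s : ℝ} (hs : 0 ≤ s) :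
    ∫ t in Set.Ioc 0 s, r * Real.exp (-(r*t)) * t^2
      = 2/r^2 - (s^2 + 2*s/r + 2/r^2) * Real.exp (-(r*s)) := by
  rw [← intervalIntegral.integral_of_le hs]
  rw [intervalIntegral.integral_eq_sub_of_hasDerivAt (fun t _ => antider hr t)]
  · simp [Real.exp_zero]
    field_simp
    ring
  · apply Continuous.intervalIntegrable
    continuity

lemma keyintble {r : ℝ} (hr : 0 < r) {s : ℝ} (hs : 0 ≤ s) :
    IntegrableOn (fun t => r * Real.exp (-(r*t)) * (min s t)^2) (Ioi 0) := by
  rw [← Set.Ioc_union_Ioi_eq_Ioi hs]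
  apply IntegrableOn.union
  · apply Continuous.integrableOn_Ioc
    exact ((continuous_const.mul (Real.continuous_exp.comp
      ((continuous_const.mul continuous_id).neg))).mul
      ((continuous_const.min continuous_id).pow 2))
  · have hbase : IntegrableOn (fun t => r * Real.exp (-(r*t)) * s^2) (Ioi s) :=
      ((expint hr s).const_mul r).mul_const _
    apply hbase.congr_fun _ measurableSet_Ioi
    intro t ht
    dsimp only
    rw [min_eq_left (le_of_lt ht)]

lemma keyint {r : ℝ} (hr : 0 < r) {s : ℝ} (hs : 0 ≤ s) :
    ∫ t in Ioi 0, r * Real.exp (-(r*t)) * (min s t)^2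
      = 2/r^2 * (1 - (1 + r*s) * Real.exp (-(r*s))) := by
  rw [← Set.Ioc_union_Ioi_eq_Ioi hs]
  rw [setIntegral_union (Set.Ioc_disjoint_Ioi le_rfl) measurableSet_Ioi
    ((keyintble hr hs).mono_set (by rw [← Set.Ioc_union_Ioi_eq_Ioi hs]; exact subset_union_left))
    ((keyintble hr hs).mono_set (by rw [← Set.Ioc_union_Ioi_eq_Ioi hs]; exact subset_union_right))]
  have e1 : ∫ t in Set.Ioc 0 s, r * Real.exp (-(r*t)) * (min s t)^2
      = ∫ t in Set.Ioc 0 s, r * Real.exp (-(r*t)) * t^2 := by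
    apply setIntegral_congr_fun measurableSet_Ioc
    intro t ht
    dsimp only
    rw [min_eq_right ht.2]
  have e2 : ∫ t in Ioi s, r * Real.exp (-(r*t)) * (min s t)^2
      = ∫ t in Ioi s, r * Real.exp (-(r*t)) * s^2 := by
    apply setIntegral_congr_fun measurableSet_Ioi
    intro t ht
    dsimp only
    rw [min_eq_left (le_of_lt ht)]
  rw [e1, e2, piece1 hr hs, piece2 hr s]
  have hrne : r ≠ 0 := hr.ne'
  field_simp
  ring

lemma keylin {r : ℝ} (hr : 0 < r) {s : ℝ} (hs : 0 ≤ s) :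
    ∫⁻ t, ENNReal.ofReal ((min s t)^2) ∂(expMeasure r)
      = ENNReal.ofReal (2/r^2 * (1 - (1 + r*s) * Real.exp (-(r*s)))) := by
  have hpdf : expMeasure r = volume.withDensity (exponentialPDF r) := rfl
  have hmf : Measurable (exponentialPDF r) := (measurable_exponentialPDFReal r).ennreal_ofReal
  have hmg : Measurable fun t : ℝ => ENNReal.ofReal ((min s t)^2) := by fun_prop
  rw [hpdf, lintegral_withDensity_eq_lintegral_mul _ hmf hmg]
  have hfun : (fun t => exponentialPDF r t * ENNReal.ofReal ((min s t)^2))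
      = (Ioi (0:ℝ)).indicator (fun t => ENNReal.ofReal (r * Real.exp (-(r*t)) * (min s t)^2)) := by
    funext t
    rcases lt_trichotomy t 0 with h|h|h
    · rw [exponentialPDF_of_neg h, indicator_of_notMem (by simpa using h.le)]
      simp
    · subst h
      rw [indicator_of_notMem (by simp)]
      rw [min_eq_right hs]
      simp
    · rw [exponentialPDF_of_nonneg h.le, indicator_of_mem (Set.mem_Ioi.mpr h),
        ← ENNReal.ofReal_mul (by positivity)]
  simp only [Pi.mul_apply]
  rw [hfun]
  simp only [lintegral_indicator measurableSet_Ioi]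
  rw [← ofReal_integral_eq_lintegral_ofReal (keyintble hr hs)
      (Filter.Eventually.of_forall fun t => by positivity),
    keyint hr hs]

lemma hH_nonneg {r s : ℝ} (hr : 0 < r) (hs : 0 ≤ s) :
    0 ≤ 2/r^2 * (1 - (1 + r*s) * Real.exp (-(r*s))) := by
  have h1 : (1 + r*s) * Real.exp (-(r*s)) ≤ 1 := by
    have h3 : 1 + r*s ≤ Real.exp (r*s) := by
      have := Real.add_one_le_exp (r*s); linarith
    have h4 : (1 + r*s) * Real.exp (-(r*s)) ≤ Real.exp (r*s) * Real.exp (-(r*s)) :=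
      mul_le_mul_of_nonneg_right h3 (Real.exp_pos _).le
    rwa [← Real.exp_add, add_neg_cancel, Real.exp_zero] at h4
  have h2 : (0:ℝ) ≤ 2/r^2 := by positivity
  nlinarith


/-- If `T ≥ 0` is a random variable, `r > 0`, and `R` is an exponential random variable with
rate `r` independent of `T`, then `E[min(T,R)²] = 2(1 − φ(r))/r² − (2/r)·E[T·exp(−r T)]`
where `φ(r) = E[exp(−r T)]`. -/
theorem stmt6 {Ω : Type*} [MeasurableSpace Ω] (μ : Measure Ω) [IsProbabilityMeasure μ]
    (T R : Ω → ℝ) (hTm : Measurable T) (hRm : Measurable R)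
    (hTnn : ∀ ω, 0 ≤ T ω) (r : ℝ) (hr : 0 < r)
    (hRlaw : Measure.map R μ = expMeasure r)
    (hind : IndepFun T R μ) :
    ∫ ω, (min (T ω) (R ω)) ^ 2 ∂μ =
      2 * (1 - ∫ ω, Real.exp (-r * T ω) ∂μ) / r ^ 2
        - (2 / r) * ∫ ω, T ω * Real.exp (-r * T ω) ∂μ := by
  simp only [neg_mul]
  haveI : IsProbabilityMeasure (expMeasure r) := isProbabilityMeasure_expMeasure hr
  set H : ℝ → ℝ := fun s => 2/r^2 * (1 - (1 + r*s) * Real.exp (-(r*s))) with hH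
  have hHc : Continuous H := by rw [hH]; continuity
  have hmin : Measurable fun ω => (min (T ω) (R ω))^2 := (hTm.min hRm).pow_const 2
  have hmap : Measure.map (fun ω => (T ω, R ω)) μ = (Measure.map T μ).prod (expMeasure r) := by
    rw [← hRlaw]
    exact (ProbabilityTheory.indepFun_iff_map_prod_eq_prod_map_map
      hTm.aemeasurable hRm.aemeasurable).mp hind
  have hae : ∀ᵐ s ∂(Measure.map T μ), 0 ≤ s := by
    rw [MeasureTheory.ae_map_iff hTm.aemeasurable measurableSet_Ici]
    exact Filter.Eventually.of_forall hTnn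
  have hmg : Measurable fun p : ℝ × ℝ => ENNReal.ofReal ((min p.1 p.2)^2) :=
    ((measurable_fst.min measurable_snd).pow_const 2).ennreal_ofReal
  have hlin : ∫⁻ ω, ENNReal.ofReal ((min (T ω) (R ω))^2) ∂μ
      = ∫⁻ ω, ENNReal.ofReal (H (T ω)) ∂μ := by
    calc ∫⁻ ω, ENNReal.ofReal ((min (T ω) (R ω))^2) ∂μ
        = ∫⁻ p, ENNReal.ofReal ((min p.1 p.2)^2) ∂(Measure.map (fun ω => (T ω, R ω)) μ) :=
          (lintegral_map hmg (hTm.prodMk hRm)).symm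
      _ = ∫⁻ p, ENNReal.ofReal ((min p.1 p.2)^2) ∂((Measure.map T μ).prod (expMeasure r)) := by
          rw [hmap]
      _ = ∫⁻ s, ∫⁻ t, ENNReal.ofReal ((min s t)^2) ∂(expMeasure r) ∂(Measure.map T μ) :=
          lintegral_prod _ hmg.aemeasurable
      _ = ∫⁻ s, ENNReal.ofReal (H s) ∂(Measure.map T μ) := by
          apply lintegral_congr_ae
          filter_upwards [hae] with s hs0
          exact keylin hr hs0
      _ = ∫⁻ ω, ENNReal.ofReal (H (T ω)) ∂μ :=
          lintegral_map hHc.measurable.ennreal_ofReal hTm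
  have hI1 : Integrable (fun ω => Real.exp (-(r * T ω))) μ := by
    apply Integrable.mono' (integrable_const (1:ℝ))
      ((hTm.const_mul r).neg.exp).aestronglyMeasurable
    apply Filter.Eventually.of_forall
    intro ω
    rw [Real.norm_eq_abs, abs_of_pos (Real.exp_pos _)]
    exact Real.exp_le_one_iff.mpr (by simp only [Pi.neg_apply]; nlinarith [hTnn ω])
  have hI2 : Integrable (fun ω => T ω * Real.exp (-(r * T ω))) μ := by
    apply Integrable.mono' (integrable_const (1/r))
      (hTm.mul ((hTm.const_mul r).neg.exp)).aestronglyMeasurable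
    apply Filter.Eventually.of_forall
    intro ω
    simp only [Pi.mul_apply, Pi.neg_apply]
    set x := T ω with hx
    have hx0 : 0 ≤ x := hTnn ω
    rw [Real.norm_eq_abs, abs_of_nonneg (mul_nonneg hx0 (Real.exp_pos _).le)]
    have h3 : r * x ≤ Real.exp (r*x) := by
      have := Real.add_one_le_exp (r*x); linarith
    have h4 : (r*x) * Real.exp (-(r*x)) ≤ Real.exp (r*x) * Real.exp (-(r*x)) :=
      mul_le_mul_of_nonneg_right h3 (Real.exp_pos _).le
    rw [← Real.exp_add, add_neg_cancel, Real.exp_zero] at h4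
    rw [le_div_iff₀ hr]
    nlinarith [h4]
  rw [integral_eq_lintegral_of_nonneg_ae (Filter.Eventually.of_forall fun ω => sq_nonneg _)
    hmin.aestronglyMeasurable]
  rw [hlin]
  rw [← integral_eq_lintegral_of_nonneg_ae
    (Filter.Eventually.of_forall fun ω => hH_nonneg hr (hTnn ω))
    ((hHc.measurable.comp hTm).aestronglyMeasurable)]
  have expand : (fun ω => H (T ω))
      = fun ω => 2/r^2 - (2/r^2) * Real.exp (-(r*T ω)) - (2/r) * (T ω * Real.exp (-(r*T ω))) := by
    funext ω
    rw [hH]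
    have hrne : r ≠ 0 := hr.ne'
    field_simp
    ring
  rw [expand]
  have hIa : Integrable (fun ω => 2/r^2 - 2/r^2 * Real.exp (-(r*T ω))) μ :=
    (integrable_const _).sub (hI1.const_mul _)
  rw [integral_sub hIa (hI2.const_mul _),
    integral_sub (integrable_const _) (hI1.const_mul _),
    integral_const, MeasureTheory.integral_const_mul, MeasureTheory.integral_const_mul]
  simp only [probReal_univ, ENNReal.toReal_one, smul_eq_mul, one_mul]
  ring
end

section
/- The second moment of the first passage time under Poissonian resetting at rate r > 0 satisfies E[T_r²] = ( E[min(T, R)²] + 2·E[R·𝟙{R < T}]·E[T_r] ) / φ(r), where R is an exponential random variable with rate r independent of T and φ(r) = E[exp(−r T)]. -/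
open scoped NNReal
open MeasureTheory ProbabilityTheory ENNReal



namespace Stmt9Aux

noncomputable def fq : ℝ × ℝ → ℝ≥0∞ := fun p => if p.2 < p.1 then 1 else 0
noncomputable def fp : ℝ × ℝ → ℝ≥0∞ := fun p => if p.1 ≤ p.2 then 1 else 0
noncomputable def fa : ℝ × ℝ → ℝ≥0∞ := fun p => if p.2 < p.1 then ENNReal.ofReal p.2 else 0
noncomputable def fb : ℝ × ℝ → ℝ≥0∞ := fun p => if p.2 < p.1 then ENNReal.ofReal p.2 ^ 2 else 0
noncomputable def fd : ℝ × ℝ → ℝ≥0∞ := fun p => if p.1 ≤ p.2 then ENNReal.ofReal p.1 else 0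
noncomputable def fc : ℝ × ℝ → ℝ≥0∞ := fun p => if p.1 ≤ p.2 then ENNReal.ofReal p.1 ^ 2 else 0

lemma msetlt : MeasurableSet {x : ℝ × ℝ | x.2 < x.1} :=
  measurableSet_lt measurable_snd measurable_fst

lemma msetle : MeasurableSet {x : ℝ × ℝ | x.1 ≤ x.2} :=
  measurableSet_le measurable_fst measurable_snd

lemma fq_meas : Measurable fq := Measurable.ite msetlt measurable_const measurable_const
lemma fp_meas : Measurable fp := Measurable.ite msetle measurable_const measurable_const
lemma fa_meas : Measurable fa :=
  Measurable.ite msetlt (ENNReal.measurable_ofReal.comp measurable_snd) measurable_const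
lemma fb_meas : Measurable fb :=
  Measurable.ite msetlt ((ENNReal.measurable_ofReal.comp measurable_snd).pow_const 2)
    measurable_const
lemma fd_meas : Measurable fd :=
  Measurable.ite msetle (ENNReal.measurable_ofReal.comp measurable_fst) measurable_const
lemma fc_meas : Measurable fc :=
  Measurable.ite msetle ((ENNReal.measurable_ofReal.comp measurable_fst).pow_const 2)
    measurable_const

lemma fa_eq (p : ℝ × ℝ) : fa p = fq p * ENNReal.ofReal p.2 := by
  simp only [fa, fq]; split_ifs <;> simp
lemma fb_eq (p : ℝ × ℝ) : fb p = fq p * ENNReal.ofReal p.2 ^ 2 := by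
  simp only [fb, fq]; split_ifs <;> simp
lemma fd_eq (p : ℝ × ℝ) : fd p = fp p * ENNReal.ofReal p.1 := by
  simp only [fd, fp]; split_ifs <;> simp
lemma fc_eq (p : ℝ × ℝ) : fc p = fp p * ENNReal.ofReal p.1 ^ 2 := by
  simp only [fc, fp]; split_ifs <;> simp

lemma fq_le (p : ℝ × ℝ) : fq p ≤ 1 := by simp only [fq]; split_ifs <;> simp
lemma fp_le (p : ℝ × ℝ) : fp p ≤ 1 := by simp only [fp]; split_ifs <;> simp
lemma fa_le (p : ℝ × ℝ) : fa p ≤ ENNReal.ofReal p.2 := by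
  simp only [fa]; split_ifs <;> simp
lemma fb_le (p : ℝ × ℝ) : fb p ≤ ENNReal.ofReal p.2 ^ 2 := by
  simp only [fb]; split_ifs <;> simp
lemma fd_le (p : ℝ × ℝ) : fd p ≤ ENNReal.ofReal p.2 := by
  simp only [fd]; split_ifs with h
  · exact ENNReal.ofReal_le_ofReal h
  · simp
lemma fc_le (p : ℝ × ℝ) : fc p ≤ ENNReal.ofReal p.2 ^ 2 := by
  simp only [fc]; split_ifs with h
  · exact pow_le_pow_left' (ENNReal.ofReal_le_ofReal h) 2
  · simp

lemma fp_add_fq (p : ℝ × ℝ) : fp p + fq p = 1 := by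
  simp only [fp, fq]; rcases le_or_gt p.1 p.2 with h | h
  · rw [if_pos h, if_neg (not_lt.2 h), add_zero]
  · rw [if_neg (not_le.2 h), if_pos h, zero_add]

lemma nat_sInf_eq {S : Set ℕ} {n : ℕ} (hn : n ∈ S) (hmin : ∀ m < n, m ∉ S) : sInf S = n := by
  refine le_antisymm (Nat.sInf_le hn) ?_
  by_contra h
  push_neg at h
  exact hmin _ h (Nat.sInf_mem ⟨n, hn⟩)

lemma measurable_sInfSet {Ω : Type*} [MeasurableSpace Ω] {A : ℕ → Set Ω}
    (hA : ∀ n, MeasurableSet (A n)) :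
    Measurable fun ω => sInf {n | ω ∈ A n} := by
  apply measurable_to_countable'
  intro n
  have hkey : (fun ω => sInf {n | ω ∈ A n}) ⁻¹' {n} =
      (A n ∩ ⋂ k, ⋂ _ : k < n, (A k)ᶜ) ∪ (if n = 0 then ⋂ k, (A k)ᶜ else ∅) := by
    ext ω
    simp only [Set.mem_preimage, Set.mem_singleton_iff, Set.mem_union, Set.mem_inter_iff,
      Set.mem_iInter, Set.mem_compl_iff]
    constructor
    · intro h
      by_cases hne : ∃ k, ω ∈ A k
      · left
        have h1 : sInf {n | ω ∈ A n} ∈ {n | ω ∈ A n} := Nat.sInf_mem hne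
        rw [h] at h1
        refine ⟨h1, fun k hk => ?_⟩
        have : k < sInf {n | ω ∈ A n} := h ▸ hk
        exact Nat.notMem_of_lt_sInf this
      · right
        push_neg at hne
        have h0 : {n | ω ∈ A n} = ∅ := Set.eq_empty_iff_forall_notMem.2 hne
        rw [h0, Nat.sInf_empty] at h
        rw [if_pos h.symm]
        simpa using hne
    · rintro (⟨h1, h2⟩ | h)
      · exact nat_sInf_eq h1 h2
      · by_cases h0 : n = 0
        · rw [if_pos h0] at h
          simp only [Set.mem_iInter, Set.mem_compl_iff] at h
          have : {n | ω ∈ A n} = ∅ := Set.eq_empty_iff_forall_notMem.2 h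
          rw [this, Nat.sInf_empty, h0]
        · rw [if_neg h0] at h; exact absurd h (Set.notMem_empty ω)
  rw [hkey]
  refine MeasurableSet.union ((hA n).inter ?_) ?_
  · exact MeasurableSet.iInter fun k => MeasurableSet.iInter fun _ => (hA k).compl
  · split_ifs
    · exact MeasurableSet.iInter fun k => (hA k).compl
    · exact MeasurableSet.empty

lemma measurable_comp_nat {Ω : Type*} [MeasurableSpace Ω] {F : ℕ → Ω → ℝ}
    (hF : ∀ n, Measurable (F n)) {N : Ω → ℕ} (hN : Measurable N) :
    Measurable fun ω => F (N ω) ω := by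
  have : (fun ω => F (N ω) ω) = (fun q : Ω × ℕ => F q.2 q.1) ∘ fun ω => (ω, N ω) := rfl
  rw [this]
  exact (measurable_from_prod_countable_left fun n => hF n).comp (measurable_id.prodMk hN)

lemma hasSum_geo1 {q : ℝ} (h0 : 0 ≤ q) (h1 : q < 1) :
    HasSum (fun n : ℕ => (n : ℝ) * q ^ (n - 1)) (((1 - q) ^ 2)⁻¹) := by
  have hn : ‖q‖ < 1 := by rwa [Real.norm_eq_abs, abs_of_nonneg h0]
  have h := hasSum_choose_mul_geometric_of_norm_lt_one 1 hn
  simp only [Nat.choose_one_right] at h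
  have h' : HasSum (fun n : ℕ => ((n + 1 : ℕ) : ℝ) * q ^ ((n + 1) - 1)) (1 / (1 - q) ^ 2) := by
    simpa using h
  have := (hasSum_nat_add_iff (f := fun n : ℕ => (n : ℝ) * q ^ (n - 1)) 1).1 h'
  simpa using this

lemma hasSum_geo2 {q : ℝ} (h0 : 0 ≤ q) (h1 : q < 1) :
    HasSum (fun n : ℕ => ((n * (n - 1) : ℕ) : ℝ) * q ^ (n - 2)) (2 * ((1 - q) ^ 3)⁻¹) := by
  have hn : ‖q‖ < 1 := by rwa [Real.norm_eq_abs, abs_of_nonneg h0]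
  have h := (hasSum_choose_mul_geometric_of_norm_lt_one 2 hn).mul_left 2
  have hch : ∀ n : ℕ, (2 : ℝ) * ((n + 2).choose 2 : ℝ) = (((n + 2) * (n + 1) : ℕ) : ℝ) := by
    intro n
    have h2 : 2 * ((n + 2).choose 2) = (n + 2) * (n + 1) := by
      rw [Nat.choose_two_right]
      have : n + 2 - 1 = n + 1 := rfl
      rw [this]
      have hev : 2 ∣ (n + 2) * (n + 1) := by
        have := Nat.even_mul_succ_self (n + 1)
        rw [mul_comm] at this
        exact this.two_dvd
      omega
    calc (2 : ℝ) * ((n + 2).choose 2 : ℝ) = ((2 * (n + 2).choose 2 : ℕ) : ℝ) := by push_cast; ring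
    _ = (((n + 2) * (n + 1) : ℕ) : ℝ) := by rw [h2]
  have h' : HasSum (fun n : ℕ => (((n + 2) * ((n + 2) - 1) : ℕ) : ℝ) * q ^ ((n + 2) - 2))
      (2 * (1 / (1 - q) ^ 3)) := by
    refine h.congr_fun fun n => ?_
    have e1 : (n + 2) - 1 = n + 1 := rfl
    have e2 : (n + 2) - 2 = n := rfl
    rw [e1, e2, ← hch n]
    ring
  have h2 := (hasSum_nat_add_iff (f := fun n : ℕ => ((n * (n - 1) : ℕ) : ℝ) * q ^ (n - 2)) 2).1 h'
  have hz : ∑ i ∈ Finset.range 2, ((i * (i - 1) : ℕ) : ℝ) * q ^ (i - 2) = 0 := by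
    simp [Finset.sum_range_succ]
  rw [hz, add_zero, one_div] at h2
  exact h2

lemma hasSum_congr_fun {f g : ℕ → ℝ} {s : ℝ} (h : HasSum f s) (hfg : ∀ n, f n = g n) :
    HasSum g s := (funext hfg : f = g) ▸ h

lemma expand_sq {M : Type*} [CommSemiring M] (s : Finset ℕ) (ρ : ℕ → M) (τ W : M) :
    W * (∑ i ∈ s, ρ i + τ) ^ 2
      = (∑ i ∈ s, ∑ j ∈ s, W * (ρ i * ρ j)) + 2 * ∑ i ∈ s, W * (ρ i * τ) + W * τ ^ 2 := by
  have h1 : (∑ i ∈ s, ∑ j ∈ s, W * (ρ i * ρ j)) = W * ((∑ i ∈ s, ρ i) * (∑ j ∈ s, ρ j)) := by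
    rw [Finset.sum_mul_sum, Finset.mul_sum]
    exact Finset.sum_congr rfl fun i _ => by rw [Finset.mul_sum]
  have h2 : (2 : M) * ∑ i ∈ s, W * (ρ i * τ) = W * (2 * ((∑ i ∈ s, ρ i) * τ)) := by
    rw [Finset.sum_mul, Finset.mul_sum, Finset.mul_sum]
    rw [Finset.mul_sum]
    exact Finset.sum_congr rfl fun i _ => by ring
  rw [h1, h2, ← mul_add, ← mul_add]
  congr 1
  ring

end Stmt9Aux


set_option maxHeartbeats 2000000 in
open Stmt9Aux in
/-- Second moment of the first passage time under Poissonian resetting at rate `r > 0`: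
`E[T_r²] = (E[min(T,R)²] + 2 E[R·𝟙{R<T}]·E[T_r]) / φ(r)`, where `R` is exponential of rate
`r` independent of `T` and `φ(r) = E[exp(−r T)]`; the pairs `(Tₙ, Rₙ)` are i.i.d. with
`Tₙ ~ T`, `Rₙ` exponential of rate `r` and `Tₙ ⊥ Rₙ`, `N = min{n : Tₙ ≤ Rₙ}` and
`T_r = Σ_{i<N} Rᵢ + T_N`. -/
theorem stmt9 {Ω : Type*} [MeasurableSpace Ω] (μ : Measure Ω) [IsProbabilityMeasure μ]
    (T R : Ω → ℝ) (hTm : Measurable T) (hRm : Measurable R) (hTnn : ∀ ω, 0 ≤ T ω)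
    (r : ℝ) (hr : 0 < r)
    (hRlaw : Measure.map R μ = expMeasure r)
    (hind : IndepFun T R μ)
    (Tseq Rseq : ℕ → Ω → ℝ)
    (hTseqm : ∀ n, Measurable (Tseq n)) (hRseqm : ∀ n, Measurable (Rseq n))
    (hiid : iIndepFun (fun n ω => (Tseq n ω, Rseq n ω)) μ)
    (hTdist : ∀ n, IdentDistrib (Tseq n) T μ μ)
    (hRseqlaw : ∀ n, Measure.map (Rseq n) μ = expMeasure r)
    (hTRind : ∀ n, IndepFun (Tseq n) (Rseq n) μ)
    (N : Ω → ℕ) (hN : ∀ ω, N ω = sInf {n | Tseq n ω ≤ Rseq n ω})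
    (hNfin : ∀ᵐ ω ∂μ, ∃ n, Tseq n ω ≤ Rseq n ω)
    (Tr : Ω → ℝ)
    (hTr : ∀ ω, Tr ω = (∑ i ∈ Finset.range (N ω), Rseq i ω) + Tseq (N ω) ω) :
    ∫ ω, (Tr ω) ^ 2 ∂μ =
      ((∫ ω, (min (T ω) (R ω)) ^ 2 ∂μ) +
        2 * (∫ ω, (if R ω < T ω then R ω else 0) ∂μ) * ∫ ω, Tr ω ∂μ) /
      (∫ ω, Real.exp (-r * T ω) ∂μ) := by
  classical
  have hTRm : Measurable fun ω => (T ω, R ω) := hTm.prodMk hRm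
  have hXm : ∀ n, Measurable fun ω => (Tseq n ω, Rseq n ω) :=
    fun n => (hTseqm n).prodMk (hRseqm n)
  have hjoint : Measure.map (fun ω => (T ω, R ω)) μ = (μ.map T).prod (expMeasure r) := by
    rw [← hRlaw]
    exact (indepFun_iff_map_prod_eq_prod_map_map hTm.aemeasurable hRm.aemeasurable).1 hind
  have hXlaw : ∀ k, Measure.map (fun ω => (Tseq k ω, Rseq k ω)) μ
      = Measure.map (fun ω => (T ω, R ω)) μ := by
    intro k
    rw [(indepFun_iff_map_prod_eq_prod_map_map (hTseqm k).aemeasurable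
          (hRseqm k).aemeasurable).1 (hTRind k),
      (indepFun_iff_map_prod_eq_prod_map_map hTm.aemeasurable hRm.aemeasurable).1 hind,
      (hTdist k).map_eq, hRseqlaw k, hRlaw]
  set J : (ℝ × ℝ → ℝ≥0∞) → ℝ≥0∞ := fun f => ∫⁻ ω, f (T ω, R ω) ∂μ with hJdef
  have hJX : ∀ (f : ℝ × ℝ → ℝ≥0∞), Measurable f → ∀ k,
      (∫⁻ ω, f (Tseq k ω, Rseq k ω) ∂μ) = J f := by
    intro f hf k
    rw [hJdef]
    simp only
    rw [← lintegral_map hf (hXm k), hXlaw k, lintegral_map hf hTRm]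
  have masterF : ∀ (u : Finset ℕ) (g : ℕ → ℝ × ℝ → ℝ≥0∞), (∀ k, Measurable (g k)) →
      (∫⁻ ω, ∏ k ∈ u, g k (Tseq k ω, Rseq k ω) ∂μ) = ∏ k ∈ u, J (g k) := by
    intro u g hg
    induction u using Finset.induction_on with
    | empty => simp
    | @insert i u hiu ih =>
      have hYm : ∀ k, Measurable fun ω => g k (Tseq k ω, Rseq k ω) :=
        fun k => (hg k).comp (hXm k)
      have hprodm : Measurable fun ω => ∏ k ∈ u, g k (Tseq k ω, Rseq k ω) := by
        exact Finset.measurable_prod u fun k _ => hYm k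
      have hindep : IndepFun (fun ω => ∏ k ∈ u, g k (Tseq k ω, Rseq k ω))
          (fun ω => g i (Tseq i ω, Rseq i ω)) μ := by
        have hcomp := hiid.comp (fun k => g k) hg
        have h2 := hcomp.indepFun_finset_prod_of_notMem (fun k => hYm k) hiu
        have hfe : (∏ x ∈ u, (g x ∘ fun ω => (Tseq x ω, Rseq x ω)))
            = fun ω => ∏ k ∈ u, g k (Tseq k ω, Rseq k ω) := by
          funext ω; simp [Function.comp]
        rw [hfe] at h2
        exact h2
      calc (∫⁻ ω, ∏ k ∈ insert i u, g k (Tseq k ω, Rseq k ω) ∂μ)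
          = ∫⁻ ω, (∏ k ∈ u, g k (Tseq k ω, Rseq k ω)) * g i (Tseq i ω, Rseq i ω) ∂μ := by
            apply lintegral_congr; intro ω; rw [Finset.prod_insert hiu, mul_comm]
        _ = (∫⁻ ω, ∏ k ∈ u, g k (Tseq k ω, Rseq k ω) ∂μ)
              * ∫⁻ ω, g i (Tseq i ω, Rseq i ω) ∂μ :=
            lintegral_mul_eq_lintegral_mul_lintegral_of_indepFun hprodm (hYm i) hindep
        _ = ∏ k ∈ insert i u, J (g k) := by
            rw [ih, hJX (g i) (hg i) i, Finset.prod_insert hiu, mul_comm]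
  -- events
  set A : ℕ → Set Ω := fun n => {ω | Tseq n ω ≤ Rseq n ω} with hAdef
  have hAm : ∀ n, MeasurableSet (A n) := fun n => measurableSet_le (hTseqm n) (hRseqm n)
  set C : ℕ → Set Ω := fun n =>
    {ω | (∀ k < n, Rseq k ω < Tseq k ω) ∧ Tseq n ω ≤ Rseq n ω} with hCdef
  have hCm : ∀ n, MeasurableSet (C n) := by
    intro n
    have hCeq : C n = (⋂ k, ⋂ _ : k < n, {ω | Rseq k ω < Tseq k ω}) ∩ A n := by
      ext ω
      simp [hCdef, hAdef, Set.mem_iInter]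
    rw [hCeq]
    exact (MeasurableSet.iInter fun k => MeasurableSet.iInter fun _ =>
      measurableSet_lt (hRseqm k) (hTseqm k)).inter (hAm n)
  have hCdisj : Pairwise (Function.onFun Disjoint C) := by
    intro m n hmn
    refine Set.disjoint_left.2 fun ω hm hn => ?_
    rcases hmn.lt_or_gt with h | h
    · exact absurd hm.2 (not_le.2 (hn.1 m h))
    · exact absurd hn.2 (not_le.2 (hm.1 n h))
  have hNC : ∀ n ω, ω ∈ C n → N ω = n := by
    intro n ω hω
    rw [hN ω]
    exact Stmt9Aux.nat_sInf_eq hω.2 fun m hm hmem => absurd hmem (not_le.2 (hω.1 m hm))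
  have hCunion : μ (⋃ n, C n)ᶜ = 0 := by
    have hsub : {ω | ∃ n, Tseq n ω ≤ Rseq n ω} ⊆ ⋃ n, C n := by
      intro ω hω
      have hmem : Tseq (sInf {k | Tseq k ω ≤ Rseq k ω}) ω
          ≤ Rseq (sInf {k | Tseq k ω ≤ Rseq k ω}) ω := Nat.sInf_mem hω
      refine Set.mem_iUnion.2 ⟨sInf {k | Tseq k ω ≤ Rseq k ω}, ⟨fun k hk => ?_, hmem⟩⟩
      exact not_le.1 (Nat.notMem_of_lt_sInf hk)
    refine measure_mono_null (fun ω hω => ?_) (ae_iff.1 hNfin)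
    exact fun hex => hω (hsub hex)
  have partition : ∀ f : Ω → ℝ≥0∞, (∫⁻ ω, f ω ∂μ) = ∑' n, ∫⁻ ω in C n, f ω ∂μ := by
    intro f
    rw [← lintegral_iUnion hCm hCdisj f, ← setLIntegral_univ (μ := μ) f]
    exact (setLIntegral_congr (ae_eq_univ.2 hCunion)).symm
  have hNm : Measurable N := by
    have hNfun : N = fun ω => sInf {n | ω ∈ A n} := funext fun ω => hN ω
    rw [hNfun]; exact Stmt9Aux.measurable_sInfSet hAm
  have hTrm : Measurable Tr := by
    have h1 : Tr = fun ω => (∑ i ∈ Finset.range (N ω), Rseq i ω) + Tseq (N ω) ω := funext hTr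
    rw [h1]
    exact Stmt9Aux.measurable_comp_nat
      (fun n => (Finset.measurable_sum _ fun i _ => hRseqm i).add (hTseqm n)) hNm
  -- nonneg facts
  have hIio : expMeasure r (Set.Iio 0) = 0 := by
    rw [expMeasure, gammaMeasure, withDensity_apply _ measurableSet_Iio]
    exact lintegral_gammaPDF_of_nonpos le_rfl
  have hRseq0 : ∀ i, ∀ᵐ ω ∂μ, 0 ≤ Rseq i ω := by
    intro i
    rw [ae_iff]
    have hs : {ω | ¬ 0 ≤ Rseq i ω} = Rseq i ⁻¹' Set.Iio 0 := by ext ω; simp [not_le]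
    rw [hs, ← Measure.map_apply (hRseqm i) measurableSet_Iio, hRseqlaw i]
    exact hIio
  have hR0 : ∀ᵐ ω ∂μ, 0 ≤ R ω := by
    rw [ae_iff]
    have hs : {ω | ¬ 0 ≤ R ω} = R ⁻¹' Set.Iio 0 := by ext ω; simp [not_le]
    rw [hs, ← Measure.map_apply hRm measurableSet_Iio, hRlaw]
    exact hIio
  have hTseq0 : ∀ i, ∀ᵐ ω ∂μ, 0 ≤ Tseq i ω := by
    intro i
    rw [ae_iff]
    have hs : {ω | ¬ 0 ≤ Tseq i ω} = Tseq i ⁻¹' Set.Iio 0 := by ext ω; simp [not_le]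
    rw [hs, ← Measure.map_apply (hTseqm i) measurableSet_Iio, (hTdist i).map_eq,
      Measure.map_apply hTm measurableSet_Iio]
    have : T ⁻¹' Set.Iio 0 = ∅ := by
      ext ω; simp only [Set.mem_preimage, Set.mem_Iio, Set.mem_empty_iff_false, iff_false, not_lt]
      exact hTnn ω
    rw [this, measure_empty]
  have hallnn : ∀ᵐ ω ∂μ, (∀ i, 0 ≤ Rseq i ω) ∧ ∀ i, 0 ≤ Tseq i ω :=
    (ae_all_iff.2 hRseq0).and (ae_all_iff.2 hTseq0)
  -- moments of R
  have hmom : ∀ k : ℕ, (∫⁻ ω, ENNReal.ofReal (R ω) ^ k ∂μ) < ⊤ := by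
    intro k
    have hmk : Measurable fun x : ℝ => ENNReal.ofReal x ^ k :=
      ENNReal.measurable_ofReal.pow_const k
    have hpdfm : Measurable (exponentialPDF r) := by
      have he : exponentialPDF r = fun x =>
          ENNReal.ofReal (if 0 ≤ x then r * Real.exp (-(r * x)) else 0) :=
        funext fun x => exponentialPDF_eq r x
      rw [he]
      exact ENNReal.measurable_ofReal.comp
        (Measurable.ite (measurableSet_le measurable_const measurable_id)
          ((measurable_const.mul ((measurable_id.const_mul r).neg.exp))) measurable_const)
    rw [← lintegral_map hmk hRm, hRlaw]
    have hexp : expMeasure r = volume.withDensity (exponentialPDF r) := rfl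
    rw [hexp, lintegral_withDensity_eq_lintegral_mul _ hpdfm hmk]
    set G : ℝ → ℝ := Set.indicator (Set.Ici 0) (fun x => r * Real.exp (-(r * x)) * x ^ k)
      with hGdef
    have hpt : (fun x => (exponentialPDF r * fun x => ENNReal.ofReal x ^ k) x)
        = fun x => ENNReal.ofReal (G x) := by
      funext x
      by_cases hx : (0:ℝ) ≤ x
      · simp only [Pi.mul_apply, exponentialPDF_eq, if_pos hx, hGdef,
          Set.indicator_of_mem (Set.mem_Ici.2 hx)]
        rw [← ENNReal.ofReal_pow hx, ← ENNReal.ofReal_mul (by positivity)]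
      · simp only [Pi.mul_apply, exponentialPDF_eq, if_neg hx, hGdef,
          Set.indicator_of_notMem (by simpa using hx : x ∉ Set.Ici (0:ℝ))]
        simp
    rw [hpt]
    have hGint : Integrable G (volume : Measure ℝ) := by
      rw [hGdef, integrable_indicator_iff measurableSet_Ici]
      have hbase := integrableOn_rpow_mul_exp_neg_mul_rpow (p := 1) (s := (k:ℝ)) (b := r)
        (lt_of_lt_of_le neg_one_lt_zero (Nat.cast_nonneg k)) one_pos hr
      have h2 : IntegrableOn (fun x : ℝ => r * (x ^ ((k:ℝ)) * Real.exp (-r * x ^ (1:ℝ))))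
          (Set.Ioi 0) volume := hbase.const_mul r
      have h3 : IntegrableOn (fun x : ℝ => r * Real.exp (-(r * x)) * x ^ k)
          (Set.Ioi 0) volume := by
        refine h2.congr_fun ?_ measurableSet_Ioi
        intro x hx
        have hx0 : (0:ℝ) < x := hx
        show r * (x ^ ((k:ℝ)) * Real.exp (-r * x ^ (1:ℝ))) = r * Real.exp (-(r * x)) * x ^ k
        rw [Real.rpow_one, Real.rpow_natCast, neg_mul]
        ring
      rw [integrableOn_Ici_iff_integrableOn_Ioi]
      exact h3
    have hGnn : 0 ≤ᵐ[volume] G := by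
      refine Filter.Eventually.of_forall fun x => ?_
      rw [hGdef]
      apply Set.indicator_nonneg
      intro y hy
      have : (0:ℝ) ≤ y := hy
      positivity
    exact (hasFiniteIntegral_iff_ofReal hGnn).1 hGint.hasFiniteIntegral
  have hM1 : (∫⁻ ω, ENNReal.ofReal (R ω) ∂μ) < ⊤ := by
    simpa using hmom 1
  have hM2 : (∫⁻ ω, ENNReal.ofReal (R ω) ^ 2 ∂μ) < ⊤ := hmom 2
  -- constants, finiteness
  have hone : (∫⁻ (_ : Ω), (1:ℝ≥0∞) ∂μ) = 1 := by simp
  have hqfin : J fq ≠ ⊤ := by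
    refine (lt_of_le_of_lt ((lintegral_mono fun ω => Stmt9Aux.fq_le _).trans ?_) one_lt_top).ne
    rw [hone]
  have hpfin : J fp ≠ ⊤ := by
    refine (lt_of_le_of_lt ((lintegral_mono fun ω => Stmt9Aux.fp_le _).trans ?_) one_lt_top).ne
    rw [hone]
  have hafin : J fa ≠ ⊤ :=
    (lt_of_le_of_lt (lintegral_mono fun ω => Stmt9Aux.fa_le _) hM1).ne
  have hbfin : J fb ≠ ⊤ :=
    (lt_of_le_of_lt (lintegral_mono fun ω => Stmt9Aux.fb_le _) hM2).ne
  have hcfin : J fc ≠ ⊤ :=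
    (lt_of_le_of_lt (lintegral_mono fun ω => Stmt9Aux.fc_le _) hM2).ne
  have hdfin : J fd ≠ ⊤ :=
    (lt_of_le_of_lt (lintegral_mono fun ω => Stmt9Aux.fd_le _) hM1).ne
  have hppos : J fp ≠ 0 := by
    intro h0
    have hAn : ∀ n, μ (A n) = 0 := by
      intro n
      have h1 : μ (A n) = ∫⁻ ω, fp (Tseq n ω, Rseq n ω) ∂μ := by
        rw [← lintegral_indicator_one (hAm n)]
        apply lintegral_congr; intro ω
        by_cases hω : ω ∈ A n
        · have h2 : Tseq n ω ≤ Rseq n ω := hω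
          rw [Set.indicator_of_mem hω]; simp [Stmt9Aux.fp, h2]
        · have h2 : ¬ Tseq n ω ≤ Rseq n ω := hω
          rw [Set.indicator_of_notMem hω]; simp [Stmt9Aux.fp, h2]
      rw [h1, hJX _ fp_meas n, h0]
    have hU : μ (⋃ n, A n) = 0 := measure_iUnion_null hAn
    have h3 : μ {ω | ∃ n, Tseq n ω ≤ Rseq n ω} = 0 := by
      refine measure_mono_null (fun ω hω => ?_) hU
      obtain ⟨n, hn⟩ := hω
      exact Set.mem_iUnion.2 ⟨n, hn⟩
    have h2 : μ {ω | ¬ ∃ n, Tseq n ω ≤ Rseq n ω} = 0 := ae_iff.1 hNfin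
    have h4 : (1:ℝ≥0∞) ≤ 0 := by
      have hsub : (Set.univ : Set Ω) ⊆ {ω | ∃ n, Tseq n ω ≤ Rseq n ω}
          ∪ {ω | ¬ ∃ n, Tseq n ω ≤ Rseq n ω} := fun ω _ => (em _).imp id id
      calc (1:ℝ≥0∞) = μ Set.univ := (measure_univ).symm
        _ ≤ μ ({ω | ∃ n, Tseq n ω ≤ Rseq n ω} ∪ {ω | ¬ ∃ n, Tseq n ω ≤ Rseq n ω}) :=
            measure_mono hsub
        _ ≤ μ {ω | ∃ n, Tseq n ω ≤ Rseq n ω} + μ {ω | ¬ ∃ n, Tseq n ω ≤ Rseq n ω} :=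
            measure_union_le _ _
        _ = 0 := by rw [h2, h3, add_zero]
    simp at h4
  have hpq1 : J fp + J fq = 1 := by
    calc J fp + J fq = ∫⁻ ω, (fp (T ω, R ω) + fq (T ω, R ω)) ∂μ :=
          (lintegral_add_left (fp_meas.comp hTRm) _).symm
      _ = ∫⁻ (_ : Ω), (1:ℝ≥0∞) ∂μ := lintegral_congr fun ω => Stmt9Aux.fp_add_fq _
      _ = 1 := hone
  -- exponential tail
  haveI : IsProbabilityMeasure (expMeasure r) := isProbabilityMeasure_expMeasure hr
  have hIci : ∀ t : ℝ, 0 ≤ t →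
      expMeasure r (Set.Ici t) = ENNReal.ofReal (Real.exp (-(r * t))) := by
    intro t ht
    have hIic : expMeasure r (Set.Iic t) = ENNReal.ofReal (1 - Real.exp (-(r * t))) := by
      rw [expMeasure, gammaMeasure, withDensity_apply _ measurableSet_Iic]
      have h := lintegral_exponentialPDF_eq_antiDeriv hr t
      rw [if_pos ht] at h
      exact h
    have he1 : Real.exp (-(r * t)) ≤ 1 := by
      have h0 : -(r * t) ≤ 0 := by nlinarith
      have := Real.exp_le_exp.2 h0
      simpa using this
    have hIoi : expMeasure r (Set.Ioi t) = ENNReal.ofReal (Real.exp (-(r * t))) := by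
      rw [← Set.compl_Iic, measure_compl measurableSet_Iic (measure_ne_top _ _),
        measure_univ, hIic]
      rw [← ENNReal.ofReal_one, ← ENNReal.ofReal_sub _ (by linarith)]
      norm_num
    have hsing : expMeasure r {t} = 0 := by
      rw [expMeasure, gammaMeasure, withDensity_apply _ (measurableSet_singleton t)]
      exact setLIntegral_measure_zero _ _ Real.volume_singleton
    have hsplit : Set.Ici t = {t} ∪ Set.Ioi t := by
      ext x
      simp only [Set.mem_Ici, Set.mem_union, Set.mem_singleton_iff, Set.mem_Ioi]
      constructor
      · intro h; rcases eq_or_lt_of_le h with h | h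
        · exact Or.inl h.symm
        · exact Or.inr h
      · rintro (h | h)
        · exact h.ge
        · exact h.le
    rw [hsplit, measure_union (Set.disjoint_singleton_left.2 (by simp)) measurableSet_Ioi,
      hsing, zero_add, hIoi]
  -- phi
  have hphi : (∫⁻ ω, ENNReal.ofReal (Real.exp (-r * T ω)) ∂μ) = J fp := by
    have hstep : J fp = ∫⁻ x, fp x ∂((μ.map T).prod (expMeasure r)) := by
      rw [hJdef]
      simp only
      rw [← hjoint, lintegral_map fp_meas hTRm]
    have hfp_ind : fp = Set.indicator {x : ℝ × ℝ | x.1 ≤ x.2} (fun _ => (1:ℝ≥0∞)) := by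
      funext x
      simp [Stmt9Aux.fp, Set.indicator_apply]
    have hpre : ∀ t : ℝ, (Prod.mk t ⁻¹' {x : ℝ × ℝ | x.1 ≤ x.2}) = Set.Ici t := by
      intro t; ext s; simp
    have hT0map : ∀ᵐ t ∂(μ.map T), 0 ≤ t := by
      rw [ae_iff]
      have hs : {t : ℝ | ¬ 0 ≤ t} = Set.Iio 0 := by ext t; simp [not_le]
      rw [hs, Measure.map_apply hTm measurableSet_Iio]
      have hempty : T ⁻¹' Set.Iio 0 = ∅ := by
        ext ω
        simp only [Set.mem_preimage, Set.mem_Iio, Set.mem_empty_iff_false, iff_false, not_lt]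
        exact hTnn ω
      rw [hempty, measure_empty]
    rw [hstep, hfp_ind, lintegral_indicator msetle, setLIntegral_one,
      Measure.prod_apply msetle]
    have hcong : (∫⁻ t, expMeasure r (Prod.mk t ⁻¹' {x : ℝ × ℝ | x.1 ≤ x.2}) ∂(μ.map T))
        = ∫⁻ t, ENNReal.ofReal (Real.exp (-(r * t))) ∂(μ.map T) := by
      refine lintegral_congr_ae ?_
      filter_upwards [hT0map] with t ht
      rw [hpre t, hIci t ht]
    have hfm : Measurable fun t : ℝ => ENNReal.ofReal (Real.exp (-(r * t))) :=
      (Real.measurable_exp.comp ((measurable_id.const_mul r).neg)).ennreal_ofReal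
    rw [hcong, lintegral_map hfm hTm]
    refine lintegral_congr fun ω => ?_
    rw [neg_mul]
  -- NNReal constants
  obtain ⟨pN, hpN⟩ : ∃ x : ℝ≥0, J fp = (x : ℝ≥0∞) := ⟨(J fp).toNNReal, (coe_toNNReal hpfin).symm⟩
  obtain ⟨qN, hqN⟩ : ∃ x : ℝ≥0, J fq = (x : ℝ≥0∞) := ⟨(J fq).toNNReal, (coe_toNNReal hqfin).symm⟩
  obtain ⟨aN, haN⟩ : ∃ x : ℝ≥0, J fa = (x : ℝ≥0∞) := ⟨(J fa).toNNReal, (coe_toNNReal hafin).symm⟩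
  obtain ⟨bN, hbN⟩ : ∃ x : ℝ≥0, J fb = (x : ℝ≥0∞) := ⟨(J fb).toNNReal, (coe_toNNReal hbfin).symm⟩
  obtain ⟨cN, hcN⟩ : ∃ x : ℝ≥0, J fc = (x : ℝ≥0∞) := ⟨(J fc).toNNReal, (coe_toNNReal hcfin).symm⟩
  obtain ⟨dN, hdN⟩ : ∃ x : ℝ≥0, J fd = (x : ℝ≥0∞) := ⟨(J fd).toNNReal, (coe_toNNReal hdfin).symm⟩
  set p : ℝ := (pN : ℝ) with hpdef
  set q : ℝ := (qN : ℝ) with hqdef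
  set a : ℝ := (aN : ℝ) with hadef
  set b : ℝ := (bN : ℝ) with hbdef
  set c : ℝ := (cN : ℝ) with hcdef
  set d : ℝ := (dN : ℝ) with hddef
  have hp_pos : 0 < p := by
    have hne : pN ≠ 0 := by
      intro h
      rw [h] at hpN
      exact hppos (by simpa using hpN)
    rw [hpdef]
    exact_mod_cast pos_iff_ne_zero.2 hne
  have hpq : p + q = 1 := by
    rw [hpN, hqN] at hpq1
    have : pN + qN = 1 := by exact_mod_cast hpq1
    rw [hpdef, hqdef]
    exact_mod_cast congrArg (fun x : ℝ≥0 => (x:ℝ)) this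
  have hq0 : 0 ≤ q := qN.2
  have hq1 : q < 1 := by linarith
  -- key per-n evaluations
  have keyW : ∀ n : ℕ, (∫⁻ ω in C n, ENNReal.ofReal (Tr ω) ∂μ)
      = (n : ℝ≥0∞) * (J fa * J fq ^ (n - 1) * J fp) + J fd * J fq ^ n := by
    intro n
    set W : Ω → ℝ≥0∞ := fun ω =>
      (∏ k ∈ Finset.range n, fq (Tseq k ω, Rseq k ω)) * fp (Tseq n ω, Rseq n ω) with hWdef
    have hWm : Measurable W := by
      exact (Finset.measurable_prod (Finset.range n)
        (fun k _ => fq_meas.comp (hXm k))).mul (fp_meas.comp (hXm n))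
    have hW01 : ∀ ω, W ω = if ω ∈ C n then 1 else 0 := by
      intro ω
      by_cases hω : ω ∈ C n
      · rw [if_pos hω]
        simp only [hWdef]
        have hrej : ∀ k ∈ Finset.range n, fq (Tseq k ω, Rseq k ω) = 1 := by
          intro k hk
          have h := hω.1 k (Finset.mem_range.1 hk)
          simp [Stmt9Aux.fq, h]
        have hacc : fp (Tseq n ω, Rseq n ω) = 1 := by
          have h := hω.2
          simp [Stmt9Aux.fp, h]
        rw [Finset.prod_eq_one hrej, hacc, one_mul]
      · rw [if_neg hω]
        simp only [hWdef]
        by_cases hP : ∀ k < n, Rseq k ω < Tseq k ω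
        · have hQ : ¬ Tseq n ω ≤ Rseq n ω := fun hQ => hω ⟨hP, hQ⟩
          have h : fp (Tseq n ω, Rseq n ω) = 0 := by simp [Stmt9Aux.fp, hQ]
          rw [h, mul_zero]
        · push_neg at hP
          obtain ⟨k, hk, hk2⟩ := hP
          have hz : fq (Tseq k ω, Rseq k ω) = 0 := by
            simp only [Stmt9Aux.fq]
            rw [if_neg (not_lt.2 hk2)]
          rw [Finset.prod_eq_zero (Finset.mem_range.2 hk) hz, zero_mul]
    have hCW : ∀ (F : Ω → ℝ≥0∞), (∫⁻ ω in C n, F ω ∂μ) = ∫⁻ ω, W ω * F ω ∂μ := by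
      intro F
      rw [← lintegral_indicator (hCm n)]
      refine lintegral_congr fun ω => ?_
      rw [Set.indicator_apply, hW01 ω]
      by_cases hω : ω ∈ C n <;> simp [hω]
    have hstep1 : (∫⁻ ω in C n, ENNReal.ofReal (Tr ω) ∂μ)
        = ∫⁻ ω in C n, ENNReal.ofReal ((∑ i ∈ Finset.range n, Rseq i ω) + Tseq n ω) ∂μ := by
      refine setLIntegral_congr_fun (hCm n) (fun ω hω => ?_)
      rw [hTr ω, hNC n ω hω]
    rw [hstep1, hCW]
    have hsplit : (fun ω => W ω * ENNReal.ofReal ((∑ i ∈ Finset.range n, Rseq i ω) + Tseq n ω))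
        =ᵐ[μ] fun ω => (∑ i ∈ Finset.range n, W ω * ENNReal.ofReal (Rseq i ω))
            + W ω * ENNReal.ofReal (Tseq n ω) := by
      filter_upwards [hallnn] with ω hω
      rw [ENNReal.ofReal_add (Finset.sum_nonneg fun i _ => hω.1 i) (hω.2 n),
        ENNReal.ofReal_sum_of_nonneg (fun i _ => hω.1 i), mul_add, Finset.mul_sum]
    have hsummeas : Measurable fun ω => ∑ i ∈ Finset.range n, W ω * ENNReal.ofReal (Rseq i ω) := by
      exact Finset.measurable_sum (Finset.range n) fun i _ => hWm.mul (hRseqm i).ennreal_ofReal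
    rw [lintegral_congr_ae hsplit, lintegral_add_left hsummeas,
      lintegral_finset_sum (f := fun i ω => W ω * ENNReal.ofReal (Rseq i ω)) _
        (fun i _ => hWm.mul (hRseqm i).ennreal_ofReal)]
    have hterm1 : ∀ i ∈ Finset.range n, (∫⁻ ω, W ω * ENNReal.ofReal (Rseq i ω) ∂μ)
        = J fa * J fq ^ (n - 1) * J fp := by
      intro i hi
      have hin : i ≠ n := (Finset.mem_range.1 hi).ne
      set g : ℕ → ℝ × ℝ → ℝ≥0∞ :=
        Function.update (Function.update (fun _ => fq) n fp) i fa with hgdef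
      have hgi : g i = fa := by rw [hgdef]; exact Function.update_self _ _ _
      have hgn : g n = fp := by
        rw [hgdef, Function.update_of_ne (Ne.symm hin)]
        exact Function.update_self _ _ _
      have hgo : ∀ k, k ≠ i → k ≠ n → g k = fq := fun k h1 h2 => by
        rw [hgdef, Function.update_of_ne h1, Function.update_of_ne h2]
      have hg : ∀ k, Measurable (g k) := by
        intro k
        rcases eq_or_ne k i with h | h
        · rw [h, hgi]; exact fa_meas
        · rcases eq_or_ne k n with h2 | h2
          · rw [h2, hgn]; exact fp_meas
          · rw [hgo k h h2]; exact fq_meas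
      have hpt : (fun ω => W ω * ENNReal.ofReal (Rseq i ω))
          = fun ω => ∏ k ∈ Finset.range (n+1), g k (Tseq k ω, Rseq k ω) := by
        funext ω
        rw [Finset.prod_range_succ]
        have e1 : ∏ k ∈ Finset.range n, g k (Tseq k ω, Rseq k ω)
            = fa (Tseq i ω, Rseq i ω)
              * ∏ k ∈ (Finset.range n).erase i, fq (Tseq k ω, Rseq k ω) := by
          rw [← Finset.mul_prod_erase (Finset.range n)
            (fun k => g k (Tseq k ω, Rseq k ω)) hi, hgi]
          congr 1
          refine Finset.prod_congr rfl fun k hk => ?_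
          rw [hgo k (Finset.ne_of_mem_erase hk)
            (Finset.mem_range.1 (Finset.mem_of_mem_erase hk)).ne]
        have e2 : ∏ k ∈ Finset.range n, fq (Tseq k ω, Rseq k ω)
            = fq (Tseq i ω, Rseq i ω)
              * ∏ k ∈ (Finset.range n).erase i, fq (Tseq k ω, Rseq k ω) :=
          (Finset.mul_prod_erase (Finset.range n) _ hi).symm
        simp only [hWdef]
        rw [e1, hgn, e2, Stmt9Aux.fa_eq]
        ring
      rw [hpt, masterF _ g hg, Finset.prod_range_succ, hgn]
      have e3 : ∏ k ∈ Finset.range n, J (g k) = J fa * J fq ^ (n - 1) := by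
        rw [← Finset.mul_prod_erase (Finset.range n) (fun k => J (g k)) hi, hgi]
        congr 1
        have hcongr : ∀ k ∈ (Finset.range n).erase i, J (g k) = J fq := fun k hk => by
          rw [hgo k (Finset.ne_of_mem_erase hk)
            (Finset.mem_range.1 (Finset.mem_of_mem_erase hk)).ne]
        rw [Finset.prod_congr rfl hcongr, Finset.prod_const,
          Finset.card_erase_of_mem hi, Finset.card_range]
      rw [e3]
    have hterm2 : (∫⁻ ω, W ω * ENNReal.ofReal (Tseq n ω) ∂μ) = J fd * J fq ^ n := by
      set g : ℕ → ℝ × ℝ → ℝ≥0∞ := Function.update (fun _ => fq) n fd with hgdef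
      have hgn : g n = fd := by rw [hgdef]; exact Function.update_self _ _ _
      have hgo : ∀ k, k ≠ n → g k = fq := fun k h => by rw [hgdef, Function.update_of_ne h]
      have hg : ∀ k, Measurable (g k) := by
        intro k
        rcases eq_or_ne k n with h | h
        · rw [h, hgn]; exact fd_meas
        · rw [hgo k h]; exact fq_meas
      have hpt : (fun ω => W ω * ENNReal.ofReal (Tseq n ω))
          = fun ω => ∏ k ∈ Finset.range (n+1), g k (Tseq k ω, Rseq k ω) := by
        funext ω
        rw [Finset.prod_range_succ]
        have e1 : ∏ k ∈ Finset.range n, g k (Tseq k ω, Rseq k ω)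
            = ∏ k ∈ Finset.range n, fq (Tseq k ω, Rseq k ω) :=
          Finset.prod_congr rfl fun k hk => by rw [hgo k (Finset.mem_range.1 hk).ne]
        simp only [hWdef]
        rw [e1, hgn, Stmt9Aux.fd_eq]
        ring
      rw [hpt, masterF _ g hg, Finset.prod_range_succ, hgn]
      have e1 : ∏ k ∈ Finset.range n, J (g k) = J fq ^ n := by
        rw [Finset.prod_congr rfl fun k hk => by rw [hgo k (Finset.mem_range.1 hk).ne],
          Finset.prod_const, Finset.card_range]
      rw [e1, mul_comm]
    rw [Finset.sum_congr rfl hterm1, hterm2, Finset.sum_const, Finset.card_range, nsmul_eq_mul]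
  have keyV : ∀ n : ℕ, (∫⁻ ω in C n, ENNReal.ofReal (Tr ω ^ 2) ∂μ)
      = (n : ℝ≥0∞) * (J fb * J fq ^ (n - 1) * J fp)
        + ((n * (n - 1) : ℕ) : ℝ≥0∞) * (J fa * J fa * J fq ^ (n - 2) * J fp)
        + 2 * ((n : ℝ≥0∞) * (J fa * J fd * J fq ^ (n - 1)))
        + J fc * J fq ^ n := by
    intro n
    set W : Ω → ℝ≥0∞ := fun ω =>
      (∏ k ∈ Finset.range n, fq (Tseq k ω, Rseq k ω)) * fp (Tseq n ω, Rseq n ω) with hWdef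
    have hWm : Measurable W := by
      exact (Finset.measurable_prod (Finset.range n)
        (fun k _ => fq_meas.comp (hXm k))).mul (fp_meas.comp (hXm n))
    have hW01 : ∀ ω, W ω = if ω ∈ C n then 1 else 0 := by
      intro ω
      by_cases hω : ω ∈ C n
      · rw [if_pos hω]
        simp only [hWdef]
        have hrej : ∀ k ∈ Finset.range n, fq (Tseq k ω, Rseq k ω) = 1 := by
          intro k hk
          have h := hω.1 k (Finset.mem_range.1 hk)
          simp [Stmt9Aux.fq, h]
        have hacc : fp (Tseq n ω, Rseq n ω) = 1 := by
          have h := hω.2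
          simp [Stmt9Aux.fp, h]
        rw [Finset.prod_eq_one hrej, hacc, one_mul]
      · rw [if_neg hω]
        simp only [hWdef]
        by_cases hP : ∀ k < n, Rseq k ω < Tseq k ω
        · have hQ : ¬ Tseq n ω ≤ Rseq n ω := fun hQ => hω ⟨hP, hQ⟩
          have h : fp (Tseq n ω, Rseq n ω) = 0 := by simp [Stmt9Aux.fp, hQ]
          rw [h, mul_zero]
        · push_neg at hP
          obtain ⟨k, hk, hk2⟩ := hP
          have hz : fq (Tseq k ω, Rseq k ω) = 0 := by
            simp only [Stmt9Aux.fq]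
            rw [if_neg (not_lt.2 hk2)]
          rw [Finset.prod_eq_zero (Finset.mem_range.2 hk) hz, zero_mul]
    have hCW : ∀ (F : Ω → ℝ≥0∞), (∫⁻ ω in C n, F ω ∂μ) = ∫⁻ ω, W ω * F ω ∂μ := by
      intro F
      rw [← lintegral_indicator (hCm n)]
      refine lintegral_congr fun ω => ?_
      rw [Set.indicator_apply, hW01 ω]
      by_cases hω : ω ∈ C n <;> simp [hω]
    have hstep1 : (∫⁻ ω in C n, ENNReal.ofReal (Tr ω ^ 2) ∂μ)
        = ∫⁻ ω in C n,
            ENNReal.ofReal (((∑ i ∈ Finset.range n, Rseq i ω) + Tseq n ω) ^ 2) ∂μ := by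
      refine setLIntegral_congr_fun (hCm n) (fun ω hω => ?_)
      rw [hTr ω, hNC n ω hω]
    rw [hstep1, hCW]
    have hsplit : (fun ω =>
          W ω * ENNReal.ofReal (((∑ i ∈ Finset.range n, Rseq i ω) + Tseq n ω) ^ 2))
        =ᵐ[μ] fun ω => (∑ i ∈ Finset.range n, ∑ j ∈ Finset.range n,
              W ω * (ENNReal.ofReal (Rseq i ω) * ENNReal.ofReal (Rseq j ω)))
            + 2 * ∑ i ∈ Finset.range n,
                W ω * (ENNReal.ofReal (Rseq i ω) * ENNReal.ofReal (Tseq n ω))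
            + W ω * ENNReal.ofReal (Tseq n ω) ^ 2 := by
      filter_upwards [hallnn] with ω hω
      have hs0 : 0 ≤ ∑ i ∈ Finset.range n, Rseq i ω := Finset.sum_nonneg fun i _ => hω.1 i
      rw [ENNReal.ofReal_pow (add_nonneg hs0 (hω.2 n)),
        ENNReal.ofReal_add hs0 (hω.2 n), ENNReal.ofReal_sum_of_nonneg (fun i _ => hω.1 i)]
      exact Stmt9Aux.expand_sq (Finset.range n) _ _ _
    have hm1 : ∀ i j : ℕ, Measurable fun ω =>
        W ω * (ENNReal.ofReal (Rseq i ω) * ENNReal.ofReal (Rseq j ω)) := fun i j =>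
      hWm.mul ((hRseqm i).ennreal_ofReal.mul (hRseqm j).ennreal_ofReal)
    have hm2 : ∀ i : ℕ, Measurable fun ω =>
        W ω * (ENNReal.ofReal (Rseq i ω) * ENNReal.ofReal (Tseq n ω)) := fun i =>
      hWm.mul ((hRseqm i).ennreal_ofReal.mul (hTseqm n).ennreal_ofReal)
    have hdm : Measurable fun ω => ∑ i ∈ Finset.range n, ∑ j ∈ Finset.range n,
        W ω * (ENNReal.ofReal (Rseq i ω) * ENNReal.ofReal (Rseq j ω)) := by
      exact Finset.measurable_sum _ fun i _ => Finset.measurable_sum _ fun j _ => hm1 i j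
    have hsm : Measurable fun ω => ∑ i ∈ Finset.range n,
        W ω * (ENNReal.ofReal (Rseq i ω) * ENNReal.ofReal (Tseq n ω)) := by
      exact Finset.measurable_sum _ fun i _ => hm2 i
    have h2m : Measurable fun ω => 2 * ∑ i ∈ Finset.range n,
        W ω * (ENNReal.ofReal (Rseq i ω) * ENNReal.ofReal (Tseq n ω)) := by
      exact hsm.const_mul 2
    rw [lintegral_congr_ae hsplit, lintegral_add_left (f := fun ω =>
        (∑ i ∈ Finset.range n, ∑ j ∈ Finset.range n,
          W ω * (ENNReal.ofReal (Rseq i ω) * ENNReal.ofReal (Rseq j ω)))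
        + 2 * ∑ i ∈ Finset.range n,
          W ω * (ENNReal.ofReal (Rseq i ω) * ENNReal.ofReal (Tseq n ω))) (hdm.add h2m),
      lintegral_add_left hdm, lintegral_const_mul 2 hsm,
      lintegral_finset_sum _ (fun i _ => hm2 i),
      lintegral_finset_sum _ (fun i _ => by
        exact Finset.measurable_sum (Finset.range n) fun j _ => hm1 i j)]
    have hinner : ∀ i ∈ Finset.range n,
        (∑ j ∈ Finset.range n, ∫⁻ ω,
          W ω * (ENNReal.ofReal (Rseq i ω) * ENNReal.ofReal (Rseq j ω)) ∂μ)
        = ∑ j ∈ Finset.range n, ∫⁻ ω,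
          W ω * (ENNReal.ofReal (Rseq i ω) * ENNReal.ofReal (Rseq j ω)) ∂μ := fun i _ => rfl
    -- term values
    have htermRR : ∀ i ∈ Finset.range n, ∀ j ∈ Finset.range n,
        (∫⁻ ω, W ω * (ENNReal.ofReal (Rseq i ω) * ENNReal.ofReal (Rseq j ω)) ∂μ)
        = if i = j then J fb * J fq ^ (n - 1) * J fp
          else J fa * J fa * J fq ^ (n - 2) * J fp := by
      intro i hi j hj
      by_cases hij : i = j
      · subst hij
        rw [if_pos rfl]
        have hin : i ≠ n := (Finset.mem_range.1 hi).ne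
        set g : ℕ → ℝ × ℝ → ℝ≥0∞ :=
          Function.update (Function.update (fun _ => fq) n fp) i fb with hgdef
        have hgi : g i = fb := by rw [hgdef]; exact Function.update_self _ _ _
        have hgn : g n = fp := by
          rw [hgdef, Function.update_of_ne (Ne.symm hin)]
          exact Function.update_self _ _ _
        have hgo : ∀ k, k ≠ i → k ≠ n → g k = fq := fun k h1 h2 => by
          rw [hgdef, Function.update_of_ne h1, Function.update_of_ne h2]
        have hg : ∀ k, Measurable (g k) := by
          intro k
          rcases eq_or_ne k i with h | h
          · rw [h, hgi]; exact fb_meas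
          · rcases eq_or_ne k n with h2 | h2
            · rw [h2, hgn]; exact fp_meas
            · rw [hgo k h h2]; exact fq_meas
        have hpt : (fun ω => W ω * (ENNReal.ofReal (Rseq i ω) * ENNReal.ofReal (Rseq i ω)))
            = fun ω => ∏ k ∈ Finset.range (n+1), g k (Tseq k ω, Rseq k ω) := by
          funext ω
          rw [Finset.prod_range_succ]
          have e1 : ∏ k ∈ Finset.range n, g k (Tseq k ω, Rseq k ω)
              = fb (Tseq i ω, Rseq i ω)
                * ∏ k ∈ (Finset.range n).erase i, fq (Tseq k ω, Rseq k ω) := by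
            rw [← Finset.mul_prod_erase (Finset.range n)
              (fun k => g k (Tseq k ω, Rseq k ω)) hi, hgi]
            congr 1
            refine Finset.prod_congr rfl fun k hk => ?_
            rw [hgo k (Finset.ne_of_mem_erase hk)
              (Finset.mem_range.1 (Finset.mem_of_mem_erase hk)).ne]
          have e2 : ∏ k ∈ Finset.range n, fq (Tseq k ω, Rseq k ω)
              = fq (Tseq i ω, Rseq i ω)
                * ∏ k ∈ (Finset.range n).erase i, fq (Tseq k ω, Rseq k ω) :=
            (Finset.mul_prod_erase (Finset.range n) _ hi).symm
          simp only [hWdef]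
          rw [e1, hgn, e2, Stmt9Aux.fb_eq]
          ring
        rw [hpt, masterF _ g hg, Finset.prod_range_succ, hgn]
        have e3 : ∏ k ∈ Finset.range n, J (g k) = J fb * J fq ^ (n - 1) := by
          rw [← Finset.mul_prod_erase (Finset.range n) (fun k => J (g k)) hi, hgi]
          congr 1
          have hcongr : ∀ k ∈ (Finset.range n).erase i, J (g k) = J fq := fun k hk => by
            rw [hgo k (Finset.ne_of_mem_erase hk)
              (Finset.mem_range.1 (Finset.mem_of_mem_erase hk)).ne]
          rw [Finset.prod_congr rfl hcongr, Finset.prod_const,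
            Finset.card_erase_of_mem hi, Finset.card_range]
        rw [e3]
      · rw [if_neg hij]
        have hin : i ≠ n := (Finset.mem_range.1 hi).ne
        have hjn : j ≠ n := (Finset.mem_range.1 hj).ne
        have hj' : j ∈ (Finset.range n).erase i := Finset.mem_erase.2 ⟨fun h => hij h.symm, hj⟩
        set g : ℕ → ℝ × ℝ → ℝ≥0∞ :=
          Function.update (Function.update (Function.update (fun _ => fq) n fp) j fa) i fa
          with hgdef
        have hgi : g i = fa := by rw [hgdef]; exact Function.update_self _ _ _
        have hgj : g j = fa := by
          rw [hgdef, Function.update_of_ne (fun h => hij h.symm)]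
          exact Function.update_self _ _ _
        have hgn : g n = fp := by
          rw [hgdef, Function.update_of_ne (Ne.symm hin), Function.update_of_ne (Ne.symm hjn)]
          exact Function.update_self _ _ _
        have hgo : ∀ k, k ≠ i → k ≠ j → k ≠ n → g k = fq := fun k h1 h2 h3 => by
          rw [hgdef, Function.update_of_ne h1, Function.update_of_ne h2,
            Function.update_of_ne h3]
        have hg : ∀ k, Measurable (g k) := by
          intro k
          rcases eq_or_ne k i with h | h
          · rw [h, hgi]; exact fa_meas
          · rcases eq_or_ne k j with h2 | h2
            · rw [h2, hgj]; exact fa_meas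
            · rcases eq_or_ne k n with h3 | h3
              · rw [h3, hgn]; exact fp_meas
              · rw [hgo k h h2 h3]; exact fq_meas
        have hmemo : ∀ k ∈ ((Finset.range n).erase i).erase j, g k = fq := by
          intro k hk
          have hk1 : k ≠ j := Finset.ne_of_mem_erase hk
          have hk2 : k ≠ i := Finset.ne_of_mem_erase (Finset.mem_of_mem_erase hk)
          have hk3 : k ≠ n :=
            (Finset.mem_range.1 (Finset.mem_of_mem_erase (Finset.mem_of_mem_erase hk))).ne
          exact hgo k hk2 hk1 hk3
        have hpt : (fun ω => W ω * (ENNReal.ofReal (Rseq i ω) * ENNReal.ofReal (Rseq j ω)))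
            = fun ω => ∏ k ∈ Finset.range (n+1), g k (Tseq k ω, Rseq k ω) := by
          funext ω
          rw [Finset.prod_range_succ]
          have e1 : ∏ k ∈ Finset.range n, g k (Tseq k ω, Rseq k ω)
              = fa (Tseq i ω, Rseq i ω) * (fa (Tseq j ω, Rseq j ω)
                * ∏ k ∈ ((Finset.range n).erase i).erase j, fq (Tseq k ω, Rseq k ω)) := by
            rw [← Finset.mul_prod_erase (Finset.range n)
              (fun k => g k (Tseq k ω, Rseq k ω)) hi, hgi,
              ← Finset.mul_prod_erase ((Finset.range n).erase i)
              (fun k => g k (Tseq k ω, Rseq k ω)) hj', hgj]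
            congr 2
            exact Finset.prod_congr rfl fun k hk => by rw [hmemo k hk]
          have e2 : ∏ k ∈ Finset.range n, fq (Tseq k ω, Rseq k ω)
              = fq (Tseq i ω, Rseq i ω) * (fq (Tseq j ω, Rseq j ω)
                * ∏ k ∈ ((Finset.range n).erase i).erase j, fq (Tseq k ω, Rseq k ω)) := by
            rw [← Finset.mul_prod_erase (Finset.range n)
              (fun k => fq (Tseq k ω, Rseq k ω)) hi,
              ← Finset.mul_prod_erase ((Finset.range n).erase i)
              (fun k => fq (Tseq k ω, Rseq k ω)) hj']
          simp only [hWdef]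
          rw [e1, hgn, e2, Stmt9Aux.fa_eq, Stmt9Aux.fa_eq]
          ring
        rw [hpt, masterF _ g hg, Finset.prod_range_succ, hgn]
        have e3 : ∏ k ∈ Finset.range n, J (g k) = J fa * J fa * J fq ^ (n - 2) := by
          rw [← Finset.mul_prod_erase (Finset.range n) (fun k => J (g k)) hi, hgi,
            ← Finset.mul_prod_erase ((Finset.range n).erase i) (fun k => J (g k)) hj', hgj]
          have hcongr : ∀ k ∈ ((Finset.range n).erase i).erase j, J (g k) = J fq :=
            fun k hk => by rw [hmemo k hk]
          rw [Finset.prod_congr rfl hcongr, Finset.prod_const,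
            Finset.card_erase_of_mem hj', Finset.card_erase_of_mem hi, Finset.card_range,
            ← mul_assoc]
          rfl
        rw [e3]
    have htermRT : ∀ i ∈ Finset.range n,
        (∫⁻ ω, W ω * (ENNReal.ofReal (Rseq i ω) * ENNReal.ofReal (Tseq n ω)) ∂μ)
        = J fa * J fd * J fq ^ (n - 1) := by
      intro i hi
      have hin : i ≠ n := (Finset.mem_range.1 hi).ne
      set g : ℕ → ℝ × ℝ → ℝ≥0∞ :=
        Function.update (Function.update (fun _ => fq) n fd) i fa with hgdef
      have hgi : g i = fa := by rw [hgdef]; exact Function.update_self _ _ _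
      have hgn : g n = fd := by
        rw [hgdef, Function.update_of_ne (Ne.symm hin)]
        exact Function.update_self _ _ _
      have hgo : ∀ k, k ≠ i → k ≠ n → g k = fq := fun k h1 h2 => by
        rw [hgdef, Function.update_of_ne h1, Function.update_of_ne h2]
      have hg : ∀ k, Measurable (g k) := by
        intro k
        rcases eq_or_ne k i with h | h
        · rw [h, hgi]; exact fa_meas
        · rcases eq_or_ne k n with h2 | h2
          · rw [h2, hgn]; exact fd_meas
          · rw [hgo k h h2]; exact fq_meas
      have hpt : (fun ω => W ω * (ENNReal.ofReal (Rseq i ω) * ENNReal.ofReal (Tseq n ω)))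
          = fun ω => ∏ k ∈ Finset.range (n+1), g k (Tseq k ω, Rseq k ω) := by
        funext ω
        rw [Finset.prod_range_succ]
        have e1 : ∏ k ∈ Finset.range n, g k (Tseq k ω, Rseq k ω)
            = fa (Tseq i ω, Rseq i ω)
              * ∏ k ∈ (Finset.range n).erase i, fq (Tseq k ω, Rseq k ω) := by
          rw [← Finset.mul_prod_erase (Finset.range n)
            (fun k => g k (Tseq k ω, Rseq k ω)) hi, hgi]
          congr 1
          refine Finset.prod_congr rfl fun k hk => ?_
          rw [hgo k (Finset.ne_of_mem_erase hk)
            (Finset.mem_range.1 (Finset.mem_of_mem_erase hk)).ne]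
        have e2 : ∏ k ∈ Finset.range n, fq (Tseq k ω, Rseq k ω)
            = fq (Tseq i ω, Rseq i ω)
              * ∏ k ∈ (Finset.range n).erase i, fq (Tseq k ω, Rseq k ω) :=
          (Finset.mul_prod_erase (Finset.range n) _ hi).symm
        simp only [hWdef]
        rw [e1, hgn, e2, Stmt9Aux.fa_eq, Stmt9Aux.fd_eq]
        ring
      rw [hpt, masterF _ g hg, Finset.prod_range_succ, hgn]
      have e3 : ∏ k ∈ Finset.range n, J (g k) = J fa * J fq ^ (n - 1) := by
        rw [← Finset.mul_prod_erase (Finset.range n) (fun k => J (g k)) hi, hgi]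
        congr 1
        have hcongr : ∀ k ∈ (Finset.range n).erase i, J (g k) = J fq := fun k hk => by
          rw [hgo k (Finset.ne_of_mem_erase hk)
            (Finset.mem_range.1 (Finset.mem_of_mem_erase hk)).ne]
        rw [Finset.prod_congr rfl hcongr, Finset.prod_const,
          Finset.card_erase_of_mem hi, Finset.card_range]
      rw [e3]
      ring
    have htermTT : (∫⁻ ω, W ω * ENNReal.ofReal (Tseq n ω) ^ 2 ∂μ) = J fc * J fq ^ n := by
      set g : ℕ → ℝ × ℝ → ℝ≥0∞ := Function.update (fun _ => fq) n fc with hgdef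
      have hgn : g n = fc := by rw [hgdef]; exact Function.update_self _ _ _
      have hgo : ∀ k, k ≠ n → g k = fq := fun k h => by rw [hgdef, Function.update_of_ne h]
      have hg : ∀ k, Measurable (g k) := by
        intro k
        rcases eq_or_ne k n with h | h
        · rw [h, hgn]; exact fc_meas
        · rw [hgo k h]; exact fq_meas
      have hpt : (fun ω => W ω * ENNReal.ofReal (Tseq n ω) ^ 2)
          = fun ω => ∏ k ∈ Finset.range (n+1), g k (Tseq k ω, Rseq k ω) := by
        funext ω
        rw [Finset.prod_range_succ]
        have e1 : ∏ k ∈ Finset.range n, g k (Tseq k ω, Rseq k ω)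
            = ∏ k ∈ Finset.range n, fq (Tseq k ω, Rseq k ω) :=
          Finset.prod_congr rfl fun k hk => by rw [hgo k (Finset.mem_range.1 hk).ne]
        rw [e1, hgn, Stmt9Aux.fc_eq]
        simp only [hWdef]
        ring
      rw [hpt, masterF _ g hg, Finset.prod_range_succ, hgn]
      have e1 : ∏ k ∈ Finset.range n, J (g k) = J fq ^ n := by
        rw [Finset.prod_congr rfl fun k hk => by rw [hgo k (Finset.mem_range.1 hk).ne],
          Finset.prod_const, Finset.card_range]
      rw [e1, mul_comm]
    -- assemble
    have hsumRT : (∑ i ∈ Finset.range n, ∫⁻ ω,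
          W ω * (ENNReal.ofReal (Rseq i ω) * ENNReal.ofReal (Tseq n ω)) ∂μ)
        = (n : ℝ≥0∞) * (J fa * J fd * J fq ^ (n - 1)) := by
      rw [Finset.sum_congr rfl htermRT, Finset.sum_const, Finset.card_range, nsmul_eq_mul]
    have hsumRR : (∑ i ∈ Finset.range n, ∑ j ∈ Finset.range n, ∫⁻ ω,
          W ω * (ENNReal.ofReal (Rseq i ω) * ENNReal.ofReal (Rseq j ω)) ∂μ)
        = (n : ℝ≥0∞) * (J fb * J fq ^ (n - 1) * J fp)
          + ((n * (n - 1) : ℕ) : ℝ≥0∞) * (J fa * J fa * J fq ^ (n - 2) * J fp) := by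
      have hinner2 : ∀ i ∈ Finset.range n,
          (∑ j ∈ Finset.range n, ∫⁻ ω,
            W ω * (ENNReal.ofReal (Rseq i ω) * ENNReal.ofReal (Rseq j ω)) ∂μ)
          = J fb * J fq ^ (n - 1) * J fp
            + ((n - 1 : ℕ) : ℝ≥0∞) * (J fa * J fa * J fq ^ (n - 2) * J fp) := by
        intro i hi
        have hre : ∀ j ∈ Finset.range n, (∫⁻ ω,
            W ω * (ENNReal.ofReal (Rseq i ω) * ENNReal.ofReal (Rseq j ω)) ∂μ)
            = if i = j then J fb * J fq ^ (n - 1) * J fp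
              else J fa * J fa * J fq ^ (n - 2) * J fp := fun j hj => htermRR i hi j hj
        rw [Finset.sum_congr rfl hre, ← Finset.add_sum_erase _ _ hi, if_pos rfl]
        congr 1
        have hoff : ∀ j ∈ (Finset.range n).erase i,
            (if i = j then J fb * J fq ^ (n - 1) * J fp
              else J fa * J fa * J fq ^ (n - 2) * J fp)
            = J fa * J fa * J fq ^ (n - 2) * J fp := fun j hj =>
          if_neg fun h => (Finset.ne_of_mem_erase hj) h.symm
        rw [Finset.sum_congr rfl hoff, Finset.sum_const,
          Finset.card_erase_of_mem hi, Finset.card_range, nsmul_eq_mul]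
      rw [Finset.sum_congr rfl hinner2, Finset.sum_const, Finset.card_range, nsmul_eq_mul,
        mul_add]
      congr 1
      push_cast
      ring
    have hpush : ∀ i ∈ Finset.range n, (∫⁻ ω, ∑ j ∈ Finset.range n,
          W ω * (ENNReal.ofReal (Rseq i ω) * ENNReal.ofReal (Rseq j ω)) ∂μ)
        = ∑ j ∈ Finset.range n, ∫⁻ ω,
          W ω * (ENNReal.ofReal (Rseq i ω) * ENNReal.ofReal (Rseq j ω)) ∂μ :=
      fun i _ => lintegral_finset_sum _ (fun j _ => hm1 i j)
    rw [Finset.sum_congr rfl hpush, hsumRR, hsumRT, htermTT]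
  -- real series
  have hWsum : HasSum (fun n : ℕ => (n : ℝ) * (a * q ^ (n - 1) * p) + d * q ^ n)
      (((1 - q) ^ 2)⁻¹ * (a * p) + (1 - q)⁻¹ * d) := by
    have h1 := (Stmt9Aux.hasSum_geo1 hq0 hq1).mul_right (a * p)
    have h2 := (hasSum_geometric_of_lt_one hq0 hq1).mul_right d
    exact Stmt9Aux.hasSum_congr_fun (h1.add h2) fun n => by push_cast; ring
  have hVsum : HasSum (fun n : ℕ => (n : ℝ) * (b * q ^ (n - 1) * p)
        + ((n * (n - 1) : ℕ) : ℝ) * (a * a * q ^ (n - 2) * p)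
        + 2 * ((n : ℝ) * (a * d * q ^ (n - 1)))
        + c * q ^ n)
      (((1 - q) ^ 2)⁻¹ * (b * p) + 2 * ((1 - q) ^ 3)⁻¹ * (a * a * p)
        + 2 * (((1 - q) ^ 2)⁻¹ * (a * d)) + (1 - q)⁻¹ * c) := by
    have h1 := (Stmt9Aux.hasSum_geo1 hq0 hq1).mul_right (b * p)
    have h2 := (Stmt9Aux.hasSum_geo2 hq0 hq1).mul_right (a * a * p)
    have h3 := ((Stmt9Aux.hasSum_geo1 hq0 hq1).mul_right (a * d)).mul_left 2
    have h4 := (hasSum_geometric_of_lt_one hq0 hq1).mul_right c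
    have hcomb := ((h1.add h2).add h3).add h4
    refine Stmt9Aux.hasSum_congr_fun hcomb fun n => ?_
    have : (2 * ((1 - q)^3)⁻¹) * (a * a * p) = 2 * ((1 - q)^3)⁻¹ * (a * a * p) := by ring
    push_cast
    ring
  -- integrals to lintegrals
  have hTrnn : 0 ≤ᵐ[μ] Tr := by
    filter_upwards [hallnn] with ω hω
    rw [hTr ω]
    exact add_nonneg (Finset.sum_nonneg fun i _ => hω.1 i) (hω.2 _)
  have hITr : (∫ ω, Tr ω ∂μ) = (((1 - q) ^ 2)⁻¹ * (a * p) + (1 - q)⁻¹ * d) := by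
    rw [integral_eq_lintegral_of_nonneg_ae hTrnn hTrm.aestronglyMeasurable]
    rw [partition (fun ω => ENNReal.ofReal (Tr ω))]
    have hterm : ∀ n : ℕ, (∫⁻ ω in C n, ENNReal.ofReal (Tr ω) ∂μ)
        = ((((n : ℝ≥0) * (aN * qN ^ (n-1) * pN) + dN * qN ^ n) : ℝ≥0) : ℝ≥0∞) := by
      intro n
      rw [keyW n, hpN, hqN, haN, hdN]
      push_cast
      ring
    have hptws : ∀ n : ℕ, ((((n : ℝ≥0) * (aN * qN ^ (n-1) * pN) + dN * qN ^ n) : ℝ≥0) : ℝ)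
        = (n : ℝ) * (a * q ^ (n-1) * p) + d * q ^ n := by
      intro n
      rw [hadef, hpdef, hqdef, hddef]
      push_cast
      ring
    have hsumW' : HasSum
        (fun n : ℕ => ((((n : ℝ≥0) * (aN * qN ^ (n-1) * pN) + dN * qN ^ n) : ℝ≥0) : ℝ))
        (((1 - q) ^ 2)⁻¹ * (a * p) + (1 - q)⁻¹ * d) :=
      Stmt9Aux.hasSum_congr_fun hWsum fun n => (hptws n).symm
    have hsummW : Summable (fun n : ℕ => ((n : ℝ≥0) * (aN * qN ^ (n-1) * pN) + dN * qN ^ n)) :=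
      NNReal.summable_coe.1 hsumW'.summable
    rw [tsum_congr hterm, ← ENNReal.coe_tsum hsummW, coe_toReal, NNReal.coe_tsum]
    exact hsumW'.tsum_eq
  have hITr2 : (∫ ω, Tr ω ^ 2 ∂μ) = (((1 - q) ^ 2)⁻¹ * (b * p) + 2 * ((1 - q) ^ 3)⁻¹ * (a * a * p)
        + 2 * (((1 - q) ^ 2)⁻¹ * (a * d)) + (1 - q)⁻¹ * c) := by
    have hTr2nn : 0 ≤ᵐ[μ] fun ω => Tr ω ^ 2 :=
      Filter.Eventually.of_forall fun ω => sq_nonneg _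
    rw [integral_eq_lintegral_of_nonneg_ae hTr2nn
      (hTrm.pow_const 2).aestronglyMeasurable]
    rw [partition (fun ω => ENNReal.ofReal (Tr ω ^ 2))]
    have hterm : ∀ n : ℕ, (∫⁻ ω in C n, ENNReal.ofReal (Tr ω ^ 2) ∂μ)
        = ((((n : ℝ≥0) * (bN * qN ^ (n-1) * pN)
            + ((n * (n - 1) : ℕ) : ℝ≥0) * (aN * aN * qN ^ (n-2) * pN)
            + 2 * ((n : ℝ≥0) * (aN * dN * qN ^ (n-1)))
            + cN * qN ^ n) : ℝ≥0) : ℝ≥0∞) := by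
      intro n
      rw [keyV n, hpN, hqN, haN, hbN, hcN, hdN]
      push_cast
      ring
    have hptws : ∀ n : ℕ, ((((n : ℝ≥0) * (bN * qN ^ (n-1) * pN)
            + ((n * (n - 1) : ℕ) : ℝ≥0) * (aN * aN * qN ^ (n-2) * pN)
            + 2 * ((n : ℝ≥0) * (aN * dN * qN ^ (n-1)))
            + cN * qN ^ n) : ℝ≥0) : ℝ)
        = (n : ℝ) * (b * q ^ (n - 1) * p)
            + ((n * (n - 1) : ℕ) : ℝ) * (a * a * q ^ (n - 2) * p)
            + 2 * ((n : ℝ) * (a * d * q ^ (n - 1)))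
            + c * q ^ n := by
      intro n
      rw [hadef, hbdef, hcdef, hddef, hpdef, hqdef]
      simp only [NNReal.coe_add, NNReal.coe_mul, NNReal.coe_pow, NNReal.coe_natCast,
        NNReal.coe_ofNat]
    have hsumV' : HasSum
        (fun n : ℕ => ((((n : ℝ≥0) * (bN * qN ^ (n-1) * pN)
            + ((n * (n - 1) : ℕ) : ℝ≥0) * (aN * aN * qN ^ (n-2) * pN)
            + 2 * ((n : ℝ≥0) * (aN * dN * qN ^ (n-1)))
            + cN * qN ^ n) : ℝ≥0) : ℝ))
        (((1 - q) ^ 2)⁻¹ * (b * p) + 2 * ((1 - q) ^ 3)⁻¹ * (a * a * p)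
          + 2 * (((1 - q) ^ 2)⁻¹ * (a * d)) + (1 - q)⁻¹ * c) :=
      Stmt9Aux.hasSum_congr_fun hVsum fun n => (hptws n).symm
    have hsummV : Summable (fun n : ℕ => ((n : ℝ≥0) * (bN * qN ^ (n-1) * pN)
            + ((n * (n - 1) : ℕ) : ℝ≥0) * (aN * aN * qN ^ (n-2) * pN)
            + 2 * ((n : ℝ≥0) * (aN * dN * qN ^ (n-1)))
            + cN * qN ^ n)) :=
      NNReal.summable_coe.1 hsumV'.summable
    rw [tsum_congr hterm, ← ENNReal.coe_tsum hsummV, coe_toReal, NNReal.coe_tsum]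
    exact hsumV'.tsum_eq
  have hImin : (∫ ω, (min (T ω) (R ω)) ^ 2 ∂μ) = b + c := by
    have hnn : 0 ≤ᵐ[μ] fun ω => (min (T ω) (R ω)) ^ 2 :=
      Filter.Eventually.of_forall fun ω => sq_nonneg _
    rw [integral_eq_lintegral_of_nonneg_ae hnn
      ((hTm.min hRm).pow_const 2).aestronglyMeasurable]
    have hae : (fun ω => ENNReal.ofReal ((min (T ω) (R ω)) ^ 2))
        =ᵐ[μ] fun ω => fb (T ω, R ω) + fc (T ω, R ω) := by
      filter_upwards [hR0] with ω hω
      rcases lt_or_ge (R ω) (T ω) with h | h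
      · have hmin : min (T ω) (R ω) = R ω := min_eq_right h.le
        simp only [Stmt9Aux.fb, Stmt9Aux.fc, hmin]
        rw [if_pos h, if_neg (not_le.2 h), add_zero, ENNReal.ofReal_pow hω]
      · have hmin : min (T ω) (R ω) = T ω := min_eq_left h
        simp only [Stmt9Aux.fb, Stmt9Aux.fc, hmin]
        rw [if_neg (not_lt.2 h), if_pos h, zero_add, ENNReal.ofReal_pow (hTnn ω)]
    rw [lintegral_congr_ae hae,
      lintegral_add_left (f := fun ω => fb (T ω, R ω)) (by exact fb_meas.comp hTRm)]
    have e1 : (∫⁻ ω, fb (T ω, R ω) ∂μ) = J fb := rfl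
    have e2 : (∫⁻ ω, fc (T ω, R ω) ∂μ) = J fc := rfl
    rw [e1, e2, hbN, hcN, hbdef, hcdef, ← ENNReal.coe_add, coe_toReal, NNReal.coe_add]
  have hIa : (∫ ω, (if R ω < T ω then R ω else 0) ∂μ) = a := by
    have hnn : 0 ≤ᵐ[μ] fun ω => (if R ω < T ω then R ω else 0 : ℝ) := by
      filter_upwards [hR0] with ω hω
      split_ifs
      · exact hω
      · exact le_rfl
    rw [integral_eq_lintegral_of_nonneg_ae hnn
      (Measurable.ite (measurableSet_lt hRm hTm) hRm measurable_const).aestronglyMeasurable]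
    have hpt : (fun ω => ENNReal.ofReal (if R ω < T ω then R ω else 0))
        = fun ω => fa (T ω, R ω) := by
      funext ω
      simp only [Stmt9Aux.fa]
      split_ifs <;> simp
    rw [hpt]
    have e1 : (∫⁻ ω, fa (T ω, R ω) ∂μ) = J fa := rfl
    rw [e1, haN, hadef, coe_toReal]
  have hIphi : (∫ ω, Real.exp (-r * T ω) ∂μ) = p := by
    have hnn : 0 ≤ᵐ[μ] fun ω => Real.exp (-r * T ω) :=
      Filter.Eventually.of_forall fun ω => (Real.exp_pos _).le
    rw [integral_eq_lintegral_of_nonneg_ae hnn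
      (Real.measurable_exp.comp (hTm.const_mul (-r))).aestronglyMeasurable]
    rw [hphi, hpN, hpdef, coe_toReal]
  rw [hITr, hITr2, hImin, hIa, hIphi]
  have h1q : 1 - q = p := by linarith
  rw [h1q]
  field_simp
  ring
end

section
/- Let T be a nonnegative real-valued random variable with E[T²] < ∞ and E[T] > 0, and for r > 0 set m(r) = (1 − φ(r)) / (r · φ(r)) with φ(r) = E[exp(−r T)]. Then lim_{r → 0⁺} (m(r) − E[T]) / r = ((E[T])² − Var(T)) / 2. Consequently, if the coefficient of variation exceeds one, i.e. Var(T) > (E[T])², then m(r) < E[T] for all sufficiently small r > 0, so resetting at a small rate reduces the mean first passage time. -/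
open MeasureTheory ProbabilityTheory Filter Topology

private lemma aux_one_sub_le_exp_neg (x : ℝ) : 1 - x ≤ Real.exp (-x) := by
  have := Real.add_one_le_exp (-x); linarith

private lemma aux_exp_neg_le (x : ℝ) (hx : 0 ≤ x) :
    Real.exp (-x) ≤ 1 - x + x ^ 2 / 2 := by
  set f : ℝ → ℝ := fun y => 1 - y + y ^ 2 / 2 - Real.exp (-y) with hf
  have hder : ∀ y : ℝ, HasDerivAt f (-1 + y + Real.exp (-y)) y := by
    intro y
    have he : HasDerivAt (fun y : ℝ => Real.exp (-y)) (-Real.exp (-y)) y := by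
      simpa [Function.comp_def] using (Real.hasDerivAt_exp (-y)).comp y (hasDerivAt_neg y)
    have h1 : HasDerivAt (fun y : ℝ => 1 - y + y ^ 2 / 2) (-1 + y) y := by
      have := ((hasDerivAt_id y).const_sub 1).add
        (((hasDerivAt_pow 2 y)).div_const 2)
      refine this.congr_deriv ?_; ring
    simpa [hf, Pi.sub_def] using (h1.sub he)
  have hmono : Monotone f := by
    apply monotone_of_deriv_nonneg (fun y => (hder y).differentiableAt)
    intro y
    rw [(hder y).deriv]
    have := aux_one_sub_le_exp_neg y
    linarith
  have h0 : f 0 = 0 := by simp [hf]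
  have := hmono hx
  rw [h0] at this
  simp only [hf] at this
  linarith

private lemma aux_le_exp_neg (x : ℝ) (hx : 0 ≤ x) :
    1 - x + x ^ 2 / 2 - x ^ 3 / 6 ≤ Real.exp (-x) := by
  set g : ℝ → ℝ := fun y => Real.exp (-y) - (1 - y + y ^ 2 / 2 - y ^ 3 / 6) with hg
  have hder : ∀ y : ℝ, HasDerivAt g (-Real.exp (-y) + 1 - y + y ^ 2 / 2) y := by
    intro y
    have he : HasDerivAt (fun y : ℝ => Real.exp (-y)) (-Real.exp (-y)) y := by
      simpa [Function.comp_def] using (Real.hasDerivAt_exp (-y)).comp y (hasDerivAt_neg y)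
    have h1 : HasDerivAt (fun y : ℝ => 1 - y + y ^ 2 / 2 - y ^ 3 / 6)
        (-1 + y - y ^ 2 / 2) y := by
      have := (((hasDerivAt_id y).const_sub 1).add
        ((hasDerivAt_pow 2 y).div_const 2)).sub ((hasDerivAt_pow 3 y).div_const 6)
      refine this.congr_deriv ?_; ring
    have := he.sub h1
    refine this.congr_deriv ?_; ring
  have hmono : MonotoneOn g (Set.Ici (0 : ℝ)) := by
    apply monotoneOn_of_deriv_nonneg (convex_Ici 0)
      (fun y _ => (hder y).differentiableAt.continuousAt.continuousWithinAt)
      (fun y _ => (hder y).differentiableAt.differentiableWithinAt)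
    intro y hy
    rw [interior_Ici] at hy
    rw [(hder y).deriv]
    have := aux_exp_neg_le y (le_of_lt hy)
    linarith
  have h0 : g 0 = 0 := by simp [hg]
  have := hmono Set.self_mem_Ici (Set.mem_Ici.mpr hx) hx
  rw [h0] at this
  simp only [hg] at this
  linarith

/-- For a nonnegative first-passage time `T` with `E[T²] < ∞` and `E[T] > 0`, and
`m(r) = (1 − φ(r))/(r φ(r))` with `φ(r) = E[exp(−r T)]`, one has
`lim_{r→0⁺} (m(r) − E[T])/r = ((E[T])² − Var(T))/2`.  Consequently, if the coefficient of
variation exceeds one, i.e. `Var(T) > (E[T])²`, then `m(r) < E[T]` for all sufficiently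
small `r > 0`: resetting at a small rate reduces the mean first passage time. -/
theorem stmt11 {Ω : Type*} [MeasurableSpace Ω] (μ : Measure Ω) [IsProbabilityMeasure μ]
    (T : Ω → ℝ) (hTm : Measurable T) (hTnn : ∀ ω, 0 ≤ T ω)
    (hT2 : Integrable (fun ω => (T ω) ^ 2) μ)
    (hTpos : 0 < ∫ ω, T ω ∂μ)
    (m : ℝ → ℝ)
    (hm : ∀ ρ : ℝ, m ρ =
      (1 - ∫ ω, Real.exp (-ρ * T ω) ∂μ) / (ρ * ∫ ω, Real.exp (-ρ * T ω) ∂μ)) :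
    Tendsto (fun r => (m r - ∫ ω, T ω ∂μ) / r) (𝓝[>] (0 : ℝ))
      (𝓝 (((∫ ω, T ω ∂μ) ^ 2 - variance T μ) / 2)) ∧
    ((∫ ω, T ω ∂μ) ^ 2 < variance T μ →
      ∀ᶠ r in 𝓝[>] (0 : ℝ), m r < ∫ ω, T ω ∂μ) := by
  set E1 : ℝ := ∫ ω, T ω ∂μ with hE1
  set E2 : ℝ := ∫ ω, (T ω) ^ 2 ∂μ with hE2
  set φ : ℝ → ℝ := fun r => ∫ ω, Real.exp (-r * T ω) ∂μ with hφ
  -- Memℒp and integrability of T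
  have hmem : MemLp T 2 μ := by
    rw [memLp_two_iff_integrable_sq hTm.aestronglyMeasurable]
    exact hT2.congr (by filter_upwards with ω; simp [Pi.pow_apply])
  have hT1 : Integrable T μ := hmem.integrable one_le_two
  -- integrability of exp(-r T) for r ≥ 0
  have hexpMeas : ∀ r : ℝ, Measurable fun ω => Real.exp (-r * T ω) := by
    intro r
    exact Real.measurable_exp.comp (hTm.const_mul (-r))
  have hexpInt : ∀ r : ℝ, 0 ≤ r → Integrable (fun ω => Real.exp (-r * T ω)) μ := by
    intro r hr
    apply Integrable.mono' (integrable_const (1 : ℝ)) (hexpMeas r).aestronglyMeasurable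
    filter_upwards with ω
    rw [Real.norm_eq_abs, abs_of_nonneg (Real.exp_pos _).le]
    exact Real.exp_le_one_iff.mpr (by nlinarith [hTnn ω])
  -- positivity of φ for r ≥ 0
  have hφpos : ∀ r : ℝ, 0 ≤ r → 0 < φ r := by
    intro r hr
    rw [hφ]
    rw [integral_pos_iff_support_of_nonneg (fun ω => (Real.exp_pos _).le) (hexpInt r hr)]
    have : (Function.support fun ω => Real.exp (-r * T ω)) = Set.univ := by
      ext ω; simp [Function.support, (Real.exp_pos (-r * T ω)).ne']
    rw [this]
    simp
  -- r → 0 within the filter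
  have hr0 : Tendsto (fun r : ℝ => r) (𝓝[>] (0 : ℝ)) (𝓝 0) :=
    tendsto_id.mono_left nhdsWithin_le_nhds
  -- the core dominated convergence limit
  set F : ℝ → Ω → ℝ := fun r ω =>
    (1 - Real.exp (-r * T ω) - r * T ω + r ^ 2 * (T ω) ^ 2 / 2) / r ^ 2 with hF
  have hDCT : Tendsto (fun r => ∫ ω, F r ω ∂μ) (𝓝[>] (0 : ℝ)) (𝓝 0) := by
    have key : Tendsto (fun r => ∫ ω, F r ω ∂μ) (𝓝[>] (0 : ℝ))
        (𝓝 (∫ (_ : Ω), (0 : ℝ) ∂μ)) := by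
      apply tendsto_integral_filter_of_dominated_convergence
        (bound := fun ω => (T ω) ^ 2 / 2)
      · filter_upwards with r
        exact (((((measurable_const.sub (hexpMeas r)).sub
          (hTm.const_mul r)).add
          ((hTm.pow_const 2).const_mul (r ^ 2) |>.div_const 2)).div_const _)).aestronglyMeasurable
      · filter_upwards [self_mem_nhdsWithin] with r (hr : 0 < r)
        filter_upwards with ω
        have hx : 0 ≤ r * T ω := mul_nonneg hr.le (hTnn ω)
        have hB := aux_exp_neg_le (r * T ω) hx
        have hA := aux_one_sub_le_exp_neg (r * T ω)
        rw [hF]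
        simp only [Real.norm_eq_abs]
        rw [show -r * T ω = -(r * T ω) by ring]
        rw [abs_div, abs_of_nonneg (by positivity : (0:ℝ) ≤ r ^ 2),
          abs_of_nonneg (by nlinarith)]
        rw [div_le_div_iff₀ (by positivity) (by norm_num)]
        nlinarith
      · exact hT2.div_const 2
      · filter_upwards with ω
        have hb : Tendsto (fun r : ℝ => r * ((T ω) ^ 3 / 6)) (𝓝[>] (0 : ℝ)) (𝓝 0) := by
          have := hr0.mul (tendsto_const_nhds (x := (T ω) ^ 3 / 6))
          simpa using this
        refine squeeze_zero_norm' ?_ hb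
        filter_upwards [self_mem_nhdsWithin] with r (hr : 0 < r)
        have hx : 0 ≤ r * T ω := mul_nonneg hr.le (hTnn ω)
        have hC := aux_le_exp_neg (r * T ω) hx
        have hA := aux_one_sub_le_exp_neg (r * T ω)
        have hB := aux_exp_neg_le (r * T ω) hx
        rw [hF]
        simp only [Real.norm_eq_abs]
        rw [show -r * T ω = -(r * T ω) by ring]
        rw [abs_div, abs_of_nonneg (by positivity : (0:ℝ) ≤ r ^ 2),
          abs_of_nonneg (by nlinarith)]
        rw [div_le_iff₀ (by positivity)]
        nlinarith [hTnn ω, hr.le]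
    simpa using key
  -- identify ∫ F r with Q r for r > 0
  set Q : ℝ → ℝ := fun r => (1 - φ r - r * E1 + r ^ 2 * E2 / 2) / r ^ 2 with hQ
  have hFQ : ∀ r : ℝ, 0 < r → (∫ ω, F r ω ∂μ) = Q r := by
    intro r hr
    have hint1 : Integrable (fun ω => (1 : ℝ) - Real.exp (-r * T ω)) μ :=
      (integrable_const 1).sub (hexpInt r hr.le)
    have hint2 : Integrable (fun ω => r * T ω) μ := hT1.const_mul r
    have hint3 : Integrable (fun ω => r ^ 2 * (T ω) ^ 2 / 2) μ :=
      (hT2.const_mul (r ^ 2)).div_const 2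
    have hintA : Integrable (fun ω => 1 - Real.exp (-r * T ω) - r * T ω) μ :=
      hint1.sub hint2
    rw [hF, hQ]
    simp only
    rw [integral_div]
    congr 1
    rw [integral_add hintA hint3, integral_sub hint1 hint2,
      integral_sub (integrable_const 1) (hexpInt r hr.le)]
    simp only [integral_const, measure_univ, probReal_univ, ENNReal.toReal_one, smul_eq_mul, one_mul]
    rw [integral_const_mul, integral_div, integral_const_mul]
  have hQlim : Tendsto Q (𝓝[>] (0 : ℝ)) (𝓝 0) := by
    apply hDCT.congr'
    filter_upwards [self_mem_nhdsWithin] with r (hr : 0 < r)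
    exact hFQ r hr
  -- φ → 1
  have hφexpr : ∀ r : ℝ, r ≠ 0 → φ r = 1 - r * E1 + r ^ 2 * E2 / 2 - Q r * r ^ 2 := by
    intro r hr
    rw [hQ]
    field_simp
    ring
  have hφlim : Tendsto φ (𝓝[>] (0 : ℝ)) (𝓝 1) := by
    have h : Tendsto (fun r => 1 - r * E1 + r ^ 2 * E2 / 2 - Q r * r ^ 2)
        (𝓝[>] (0 : ℝ)) (𝓝 (1 - 0 * E1 + 0 ^ 2 * E2 / 2 - 0 * 0 ^ 2)) := by
      exact (((tendsto_const_nhds.sub (hr0.mul tendsto_const_nhds)).add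
        (((hr0.pow 2).mul tendsto_const_nhds).div_const 2)).sub
        (hQlim.mul (hr0.pow 2)))
    norm_num at h
    apply h.congr'
    filter_upwards [self_mem_nhdsWithin] with r (hr : 0 < r)
    exact (hφexpr r hr.ne').symm
  -- (1 - φ r)/r → E1
  have h1φ : Tendsto (fun r => (1 - φ r) / r) (𝓝[>] (0 : ℝ)) (𝓝 E1) := by
    have h : Tendsto (fun r => E1 - r * E2 / 2 + Q r * r) (𝓝[>] (0 : ℝ))
        (𝓝 (E1 - 0 * E2 / 2 + 0 * 0)) :=
      ((tendsto_const_nhds.sub ((hr0.mul tendsto_const_nhds).div_const 2)).add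
        (hQlim.mul hr0))
    norm_num at h
    apply h.congr'
    filter_upwards [self_mem_nhdsWithin] with r (hr : 0 < r)
    rw [hφexpr r hr.ne']
    field_simp
    try ring
  -- main limit
  have hmain : Tendsto (fun r => (m r - E1) / r) (𝓝[>] (0 : ℝ))
      (𝓝 ((0 - E2 / 2 + E1 * E1) / 1)) := by
    apply Tendsto.congr'
      (f₁ := fun r => (Q r - E2 / 2 + E1 * ((1 - φ r) / r)) / φ r)
    · filter_upwards [self_mem_nhdsWithin] with r (hr : 0 < r)
      have hφr : 0 < φ r := hφpos r hr.le
      have hmr : m r = (1 - φ r) / (r * φ r) := hm r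
      rw [hmr, hQ]
      simp only
      field_simp
      try ring
    · exact ((hQlim.sub tendsto_const_nhds).add
        (tendsto_const_nhds.mul h1φ)).div hφlim one_ne_zero
  -- variance identity
  have hvar : variance T μ = E2 - E1 ^ 2 := by
    rw [variance_eq_sub hmem]
    simp only [Pi.pow_apply]
    rfl
  have hval : (0 - E2 / 2 + E1 * E1) / 1 = (E1 ^ 2 - variance T μ) / 2 := by
    rw [hvar]; ring
  rw [hval] at hmain
  refine ⟨hmain, fun hlt => ?_⟩
  have hneg : (E1 ^ 2 - variance T μ) / 2 < 0 := by linarith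
  have hev : ∀ᶠ r in 𝓝[>] (0 : ℝ), (m r - E1) / r < 0 :=
    hmain.eventually_lt_const hneg
  filter_upwards [hev, self_mem_nhdsWithin] with r h1 (hr : 0 < r)
  rcases div_neg_iff.mp h1 with ⟨h2, h3⟩ | ⟨h2, h3⟩
  · exact absurd hr (not_lt.mpr h3.le)
  · linarith
end

section
/- The first passage time S under periodic resetting with period τ satisfies, for every natural number n and every real u with 0 ≤ u < τ, the survival-probability factorization P(S > nτ + u) = P(T > τ)ⁿ · P(T > u). In particular, the probability of surviving past n full resetting periods decays geometrically (exponentially) in n. -/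
open MeasureTheory ProbabilityTheory

/-!
Before the first index `N` with `T_N ≤ τ` every `T_k` exceeds `τ`, so `S` lies in the window
`[Nτ, (N+1)τ]`. Hence `S > nτ + u` (with `0 ≤ u < τ`) holds exactly when the first `n` attempts
fail (`T_k > τ` for `k < n`) and the `n`-th attempt outlives `u`. This event is an intersection
of `n + 1` independent events, whose probabilities are read off the common law of `T`.
-/

lemma mul_add_lt_mul_add_iff_of_first_le {t : ℕ → ℝ} {τ u : ℝ} {m : ℕ}
    (hm : t m ≤ τ) (hbefore : ∀ k < m, τ < t k) (hm₀ : 0 ≤ t m) (hu : 0 ≤ u) (huτ : u < τ)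
    (n : ℕ) :
    n * τ + u < m * τ + t m ↔ (∀ k < n, τ < t k) ∧ u < t n := by
  rcases lt_trichotomy m n with hmn | rfl | hnm
  · have hmn' : (m : ℝ) + 1 ≤ n := by exact_mod_cast hmn
    have hτ : 0 ≤ τ := hu.trans huτ.le
    refine iff_of_false (by nlinarith) fun h => (h.1 m hmn).not_ge hm
  · rw [add_lt_add_iff_left]
    exact ⟨fun h => ⟨hbefore, h⟩, And.right⟩
  · have hnm' : (n : ℝ) + 1 ≤ m := by exact_mod_cast hnm
    refine iff_of_true (by nlinarith) ⟨fun k hk => hbefore k (hk.trans hnm), ?_⟩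
    exact huτ.trans (hbefore n hnm)

lemma ProbabilityTheory.iIndepFun.measure_forall_lt_mem_inter_mem {Ω β : Type*}
    [MeasurableSpace Ω] [MeasurableSpace β] {μ : Measure Ω} {X : ℕ → Ω → β} {Y : Ω → β}
    (hind : iIndepFun X μ) (hident : ∀ k, IdentDistrib (X k) Y μ μ)
    {A B : Set β} (hA : MeasurableSet A) (hB : MeasurableSet B) (n : ℕ) :
    μ ({ω | ∀ k < n, X k ω ∈ A} ∩ {ω | X n ω ∈ B}) = μ (Y ⁻¹' A) ^ n * μ (Y ⁻¹' B) := by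
  classical
  let C : ℕ → Set β := fun k => if k = n then B else A
  have hC : ∀ k, MeasurableSet (C k) := fun k => by
    by_cases hk : k = n <;> simp [C, hk, hA, hB]
  have hset : {ω | ∀ k < n, X k ω ∈ A} ∩ {ω | X n ω ∈ B}
      = ⋂ k ∈ Finset.range (n + 1), X k ⁻¹' C k := by
    ext ω
    simp only [Set.mem_inter_iff, Set.mem_ofPred_eq, Set.mem_iInter, Set.mem_preimage,
      Finset.mem_range, Nat.lt_succ_iff_lt_or_eq, C]
    constructor
    · rintro ⟨hlt, hn⟩ k (hk | rfl)
      · simpa [hk.ne] using hlt k hk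
      · simpa using hn
    · intro h
      exact ⟨fun k hk => by simpa [hk.ne] using h k (.inl hk), by simpa using h n (.inr rfl)⟩
  have hCA : ∀ k ∈ Finset.range n, μ (Y ⁻¹' C k) = μ (Y ⁻¹' A) := fun k hk => by
    simp only [C, if_neg (Finset.mem_range.1 hk).ne]
  rw [hset, hind.meas_biInter fun k _ => ⟨C k, hC k, rfl⟩,
    Finset.prod_congr rfl fun k _ => (hident k).measure_mem_eq (hC k), Finset.prod_range_succ,
    Finset.prod_congr rfl hCA, Finset.prod_const, Finset.card_range]
  simp [C]

theorem stmt12_general {Ω : Type*} [MeasurableSpace Ω] (μ : Measure Ω) [IsProbabilityMeasure μ]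
    (T : Ω → ℝ) (hTnn : ∀ ω, 0 ≤ T ω)
    (τ : ℝ)
    (Tseq : ℕ → Ω → ℝ)
    (hiid : iIndepFun Tseq μ)
    (hTdist : ∀ n, IdentDistrib (Tseq n) T μ μ)
    (N : Ω → ℕ) (hN : ∀ ω, N ω = sInf {n | Tseq n ω ≤ τ})
    (hNfin : ∀ᵐ ω ∂μ, ∃ n, Tseq n ω ≤ τ)
    (S : Ω → ℝ)
    (hS : ∀ ω, S ω = (N ω : ℝ) * τ + Tseq (N ω) ω) :
    ∀ (n : ℕ) (u : ℝ), 0 ≤ u → u < τ →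
      μ {ω | (n : ℝ) * τ + u < S ω} = (μ {ω | τ < T ω}) ^ n * μ {ω | u < T ω} := by
  intro n u hu huτ
  have hnn : ∀ᵐ ω ∂μ, ∀ k, 0 ≤ Tseq k ω := ae_all_iff.2 fun k =>
    (hTdist k).symm.ae_snd measurableSet_Ici (.of_forall hTnn)
  have hevent : ({ω | (n : ℝ) * τ + u < S ω} : Set Ω)
      =ᵐ[μ] ({ω | ∀ k < n, Tseq k ω ∈ Set.Ioi τ} ∩ {ω | Tseq n ω ∈ Set.Ioi u} : Set Ω) := by
    rw [Filter.eventuallyEq_set]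
    filter_upwards [hNfin, hnn] with ω hfin hnnω
    have hfirst : Tseq (N ω) ω ≤ τ := hN ω ▸ Nat.sInf_mem hfin
    have hbefore : ∀ k < N ω, τ < Tseq k ω := fun k hk =>
      not_le.1 (Nat.notMem_of_lt_sInf (hN ω ▸ hk))
    simpa [hS ω] using
      mul_add_lt_mul_add_iff_of_first_le hfirst hbefore (hnnω _) hu huτ n
  rw [measure_congr hevent,
    hiid.measure_forall_lt_mem_inter_mem hTdist measurableSet_Ioi measurableSet_Ioi]
  rfl

/-- Under periodic resetting with period `τ > 0` (where `P(T ≤ τ) > 0`), the first passage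
time `S = (N−1)τ + T_N` (with `(Tₙ)` i.i.d. copies of `T` and `N` the first index with
`Tₙ ≤ τ`) satisfies, for every `n : ℕ` and `0 ≤ u < τ`,
`P(S > nτ + u) = P(T > τ)ⁿ · P(T > u)`; in particular the survival probability decays
geometrically in the number of full resetting periods. -/
theorem stmt12 {Ω : Type*} [MeasurableSpace Ω] (μ : Measure Ω) [IsProbabilityMeasure μ]
    (T : Ω → ℝ) (hTm : Measurable T) (hTnn : ∀ ω, 0 ≤ T ω)
    (τ : ℝ) (hτ : 0 < τ) (hpos : 0 < μ {ω | T ω ≤ τ})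
    (Tseq : ℕ → Ω → ℝ)
    (hTseqm : ∀ n, Measurable (Tseq n))
    (hiid : iIndepFun Tseq μ)
    (hTdist : ∀ n, IdentDistrib (Tseq n) T μ μ)
    (N : Ω → ℕ) (hN : ∀ ω, N ω = sInf {n | Tseq n ω ≤ τ})
    (hNfin : ∀ᵐ ω ∂μ, ∃ n, Tseq n ω ≤ τ)
    (S : Ω → ℝ)
    (hS : ∀ ω, S ω = (N ω : ℝ) * τ + Tseq (N ω) ω) :
    ∀ (n : ℕ) (u : ℝ), 0 ≤ u → u < τ →
      μ {ω | (n : ℝ) * τ + u < S ω} = (μ {ω | τ < T ω}) ^ n * μ {ω | u < T ω} :=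
  stmt12_general μ T hTnn τ Tseq hiid hTdist N hN hNfin S hS
end

section
/- The mean first passage time under periodic resetting with period τ satisfies E[S] = E[min(T, τ)] / P(T ≤ τ). -/
/-!
Split the first-passage time into the contributions of the successive periods: the `k`-th
period contributes `min(Tₖ, τ)` if all earlier attempts exceeded `τ`, and nothing otherwise,
so `S = ∑ₖ 1{T₀ > τ, …, Tₖ₋₁ > τ} · min(Tₖ, τ)`. By independence the `k`-th term has
mean `P(T > τ)ᵏ · E[min(T, τ)]`, and the geometric series sums to `E[min(T, τ)] / P(T ≤ τ)`.
-/

open MeasureTheory ProbabilityTheory Finset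
open scoped ENNReal

noncomputable def timeInPeriod (τ : ℝ) (x : ℕ → ℝ) (k : ℕ) : ℝ≥0∞ :=
  (∏ i ∈ range k, (Set.Ioi τ).indicator 1 (x i)) * ENNReal.ofReal (min (x k) τ)

theorem tsum_timeInPeriod {τ : ℝ} (hτ : 0 ≤ τ) {x : ℕ → ℝ} (hx : ∀ n, 0 ≤ x n)
    (hhit : ∃ n, x n ≤ τ) :
    ∑' k, timeInPeriod τ x k =
      ENNReal.ofReal (sInf {n | x n ≤ τ} * τ + x (sInf {n | x n ≤ τ})) := by
  set n := sInf {n | x n ≤ τ}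
  have hn : x n ≤ τ := Nat.sInf_mem hhit
  have hbelow : ∀ i < n, τ < x i := fun i hi => not_le.mp (Nat.notMem_of_lt_sInf hi)
  have hsurvive :
      ∀ k ≤ n, ∏ i ∈ range k, (Set.Ioi τ).indicator (1 : ℝ → ℝ≥0∞) (x i) = 1 :=
    fun k hk => prod_eq_one fun i hi => Set.indicator_of_mem
      (hbelow i (lt_of_lt_of_le (mem_range.mp hi) hk)) _
  have hvanish : ∀ k ∉ range (n + 1), timeInPeriod τ x k = 0 := fun k hk =>
    mul_eq_zero_of_left (prod_eq_zero (i := n) (mem_range.mpr (by simp at hk; omega))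
      (Set.indicator_of_notMem (not_lt.mpr hn) _)) _
  have hbefore : ∀ k ∈ range n, timeInPeriod τ x k = ENNReal.ofReal τ := fun k hk => by
    rw [timeInPeriod, hsurvive k (mem_range.mp hk).le, one_mul,
      min_eq_right (hbelow k (mem_range.mp hk)).le]
  rw [tsum_eq_sum hvanish, sum_range_succ, sum_congr rfl hbefore, timeInPeriod,
    hsurvive n le_rfl, one_mul, min_eq_left hn, sum_const, card_range, nsmul_eq_mul,
    ENNReal.ofReal_add (by positivity) (hx n), ENNReal.ofReal_mul (by positivity),
    ENNReal.ofReal_natCast]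

theorem lintegral_prod_range_mul_of_iIndepFun {Ω Ω' β : Type*} [MeasurableSpace Ω]
    [MeasurableSpace Ω'] [MeasurableSpace β] {μ : Measure Ω} {ν : Measure Ω'}
    {X : ℕ → Ω → β} {Y : Ω' → β} (hXm : ∀ n, Measurable (X n)) (hX : iIndepFun X μ)
    (hXY : ∀ n, IdentDistrib (X n) Y μ ν) {f g : β → ℝ≥0∞} (hf : Measurable f)
    (hg : Measurable g) (n : ℕ) :
    ∫⁻ ω, (∏ i ∈ range n, f (X i ω)) * g (X n ω) ∂μ =
      (∫⁻ ω, f (Y ω) ∂ν) ^ n * ∫⁻ ω, g (Y ω) ∂ν := by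
  set h : ℕ → β → ℝ≥0∞ := fun i => if i < n then f else g
  have hh : ∀ i, Measurable (h i) := fun i => by by_cases hi : i < n <;> simp [h, hi, hf, hg]
  have hsplit : ∀ Φ : ℕ → (β → ℝ≥0∞) → ℝ≥0∞,
      ∏ i ∈ range (n + 1), Φ i (h i) = (∏ i ∈ range n, Φ i f) * Φ n g := fun Φ => by
    rw [prod_range_succ]
    congr 1
    · exact prod_congr rfl fun i hi => by simp only [h, if_pos (mem_range.mp hi)]
    · simp only [h, lt_irrefl, if_false]
  calc ∫⁻ ω, (∏ i ∈ range n, f (X i ω)) * g (X n ω) ∂μ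
      = ∫⁻ ω, ∏ i ∈ range (n + 1), (h i ∘ X i) ω ∂μ :=
        lintegral_congr fun ω => (hsplit fun i φ => φ (X i ω)).symm
    _ = ∏ i ∈ range (n + 1), ∫⁻ ω, h i (Y ω) ∂ν := by
        rw [lintegral_prod_eq_prod_lintegral_of_indepFun _ _ (hX.comp h hh)
          fun i => (hh i).comp (hXm i)]
        exact prod_congr rfl fun i _ => ((hXY i).comp (hh i)).lintegral_eq
    _ = (∫⁻ ω, f (Y ω) ∂ν) ^ n * ∫⁻ ω, g (Y ω) ∂ν := by
        rw [hsplit fun _ φ => ∫⁻ ω, φ (Y ω) ∂ν, prod_const, card_range]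

section ResetProcess

variable {Ω Ω' : Type*} [MeasurableSpace Ω] [MeasurableSpace Ω'] {μ : Measure Ω}
  {ν : Measure Ω'} {X : ℕ → Ω → ℝ} {T : Ω' → ℝ} {τ : ℝ}

theorem measurable_timeInPeriod (hXm : ∀ n, Measurable (X n)) (k : ℕ) :
    Measurable fun ω => timeInPeriod τ (fun i => X i ω) k :=
  (measurable_prod _ fun i _ => (measurable_one.indicator measurableSet_Ioi).comp (hXm i)).mul
    ((hXm k).min measurable_const).ennreal_ofReal

theorem lintegral_timeInPeriod [IsProbabilityMeasure ν] (hXm : ∀ n, Measurable (X n))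
    (hX : iIndepFun X μ) (hXT : ∀ n, IdentDistrib (X n) T μ ν) (hTm : Measurable T) (k : ℕ) :
    ∫⁻ ω, timeInPeriod τ (fun i => X i ω) k ∂μ =
      (1 - ν {ω | T ω ≤ τ}) ^ k * ∫⁻ ω, ENNReal.ofReal (min (T ω) τ) ∂ν := by
  have hsurvive : ∫⁻ ω, (Set.Ioi τ).indicator 1 (T ω) ∂ν = 1 - ν {ω | T ω ≤ τ} := by
    simp_rw [← Set.indicator_comp_right, Pi.one_comp]
    rw [lintegral_indicator_one (hTm measurableSet_Ioi), ← Set.compl_Iic, Set.preimage_compl,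
      prob_compl_eq_one_sub (hTm measurableSet_Iic)]
    rfl
  rw [← hsurvive]
  exact lintegral_prod_range_mul_of_iIndepFun hXm hX hXT
    (measurable_one.indicator measurableSet_Ioi)
    (measurable_id.min measurable_const).ennreal_ofReal k

end ResetProcess

theorem stmt13_general {Ω : Type*} [MeasurableSpace Ω] (μ : Measure Ω) [IsProbabilityMeasure μ]
    (T : Ω → ℝ) (hTm : Measurable T) (hTnn : ∀ ω, 0 ≤ T ω)
    (τ : ℝ) (hτ : 0 < τ)
    (Tseq : ℕ → Ω → ℝ)
    (hTseqm : ∀ n, Measurable (Tseq n))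
    (hiid : iIndepFun Tseq μ)
    (hTdist : ∀ n, IdentDistrib (Tseq n) T μ μ)
    (N : Ω → ℕ) (hN : ∀ ω, N ω = sInf {n | Tseq n ω ≤ τ})
    (hNfin : ∀ᵐ ω ∂μ, ∃ n, Tseq n ω ≤ τ)
    (S : Ω → ℝ)
    (hS : ∀ ω, S ω = (N ω : ℝ) * τ + Tseq (N ω) ω) :
    ∫ ω, S ω ∂μ = (∫ ω, min (T ω) τ ∂μ) / (μ {ω | T ω ≤ τ}).toReal := by
  set p := μ {ω | T ω ≤ τ}
  set F : ℕ → Ω → ℝ≥0∞ := fun k ω => timeInPeriod τ (fun i => Tseq i ω) k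
  have hTseq_nonneg : ∀ᵐ ω ∂μ, ∀ n, 0 ≤ Tseq n ω := ae_all_iff.mpr fun n =>
    (hTdist n).symm.ae_mem_snd measurableSet_Ici (ae_of_all _ hTnn)
  have hS_tsum : ∀ᵐ ω ∂μ, ∑' k, F k ω = ENNReal.ofReal (S ω) ∧ 0 ≤ S ω := by
    filter_upwards [hNfin, hTseq_nonneg] with ω hhit hnonneg
    rw [hS, hN]
    exact ⟨tsum_timeInPeriod hτ.le hnonneg hhit, add_nonneg (by positivity) (hnonneg _)⟩
  calc ∫ ω, S ω ∂μ = ∫ ω, (∑' k, F k ω).toReal ∂μ :=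
        integral_congr_ae (hS_tsum.mono fun ω h => by
          dsimp only; rw [h.1, ENNReal.toReal_ofReal h.2])
    _ = (∫⁻ ω, ∑' k, F k ω ∂μ).toReal :=
        integral_toReal (Measurable.tsum (measurable_timeInPeriod hTseqm)).aemeasurable
          (hS_tsum.mono fun ω h => h.1 ▸ ENNReal.ofReal_lt_top)
    _ = (p⁻¹ * ∫⁻ ω, ENNReal.ofReal (min (T ω) τ) ∂μ).toReal := by
        rw [lintegral_tsum fun k => (measurable_timeInPeriod hTseqm k).aemeasurable,
          tsum_congr (lintegral_timeInPeriod hTseqm hiid hTdist hTm), ENNReal.tsum_mul_right,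
          ENNReal.tsum_geometric, ENNReal.sub_sub_cancel ENNReal.one_ne_top prob_le_one]
    _ = (∫ ω, min (T ω) τ ∂μ) / p.toReal := by
        rw [ENNReal.toReal_mul, ENNReal.toReal_inv, integral_eq_lintegral_of_nonneg_ae
          (ae_of_all _ fun ω => le_min (hTnn ω) hτ.le)
          (hTm.min measurable_const).aestronglyMeasurable, div_eq_inv_mul]

/-- Under periodic resetting with period `τ > 0` (where `P(T ≤ τ) > 0`), the mean first
passage time satisfies `E[S] = E[min(T, τ)] / P(T ≤ τ)`, where `S = (N−1)τ + T_N` with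
`(Tₙ)` i.i.d. copies of `T` and `N` the first index with `Tₙ ≤ τ`. -/
theorem stmt13 {Ω : Type*} [MeasurableSpace Ω] (μ : Measure Ω) [IsProbabilityMeasure μ]
    (T : Ω → ℝ) (hTm : Measurable T) (hTnn : ∀ ω, 0 ≤ T ω)
    (τ : ℝ) (hτ : 0 < τ) (hpos : 0 < μ {ω | T ω ≤ τ})
    (Tseq : ℕ → Ω → ℝ)
    (hTseqm : ∀ n, Measurable (Tseq n))
    (hiid : iIndepFun Tseq μ)
    (hTdist : ∀ n, IdentDistrib (Tseq n) T μ μ)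
    (N : Ω → ℕ) (hN : ∀ ω, N ω = sInf {n | Tseq n ω ≤ τ})
    (hNfin : ∀ᵐ ω ∂μ, ∃ n, Tseq n ω ≤ τ)
    (S : Ω → ℝ)
    (hS : ∀ ω, S ω = (N ω : ℝ) * τ + Tseq (N ω) ω) :
    ∫ ω, S ω ∂μ = (∫ ω, min (T ω) τ ∂μ) / (μ {ω | T ω ≤ τ}).toReal :=
  stmt13_general μ T hTm hTnn τ hτ Tseq hTseqm hiid hTdist N hN hNfin S hS
end
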